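/- arXiv:1809.02104 — 5 statements merged into one kernel-verified Lean document; each statement's English description precedes it below -/
import Mathlib

section
/- (Talagrand's inequality) Let (Ω, μ) be a probability space, g: Ω → [0,1] measurable, t ≥ 0 and α > 0. Then (∫_Ω min(e^t, g^{-α}) dμ) · (∫_Ω g dμ)^α ≤ exp(t²(α+1)/(8α)). -/
open Real MeasureTheory ProbabilityTheory Set

/-! Put `Z = log (min (exp t) (g ^ (-α))) ∈ [0, t]`, so that `g ≤ exp (-Z / α)`. Hoeffding's lemma
bounds both `∫ exp Z ≤ exp (𝔼 Z + t² / 8)` and `∫ exp (-Z / α) ≤ exp (-𝔼 Z / α + t² / (8 α²))`;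
raising the second to the power `α`, the terms `𝔼 Z` cancel in the product. -/

section Hoeffding

variable {Ω : Type*} [MeasurableSpace Ω] {μ : Measure Ω} [IsProbabilityMeasure μ]

theorem integral_exp_mul_le_of_mem_Icc {X : Ω → ℝ} {a b : ℝ} (hX : AEMeasurable X μ)
    (hab : ∀ᵐ ω ∂μ, X ω ∈ Icc a b) (s : ℝ) :
    ∫ ω, exp (s * X ω) ∂μ ≤ exp (s * μ[X] + (b - a) ^ 2 * s ^ 2 / 8) := by
  have hcentred := (hasSubgaussianMGF_of_mem_Icc hX hab).mgf_le s
  have hshift := mgf_add_const (X := fun ω ↦ X ω - μ[X]) (μ := μ) (t := s) μ[X]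
  simp only [sub_add_cancel] at hshift
  calc ∫ ω, exp (s * X ω) ∂μ = mgf (fun ω ↦ X ω - μ[X]) μ s * exp (s * μ[X]) := hshift
    _ ≤ exp ((b - a) ^ 2 * s ^ 2 / 8) * exp (s * μ[X]) := by
      gcongr
      refine hcentred.trans_eq (congrArg exp ?_)
      push_cast
      rw [Real.norm_eq_abs, div_pow, sq_abs]
      ring
    _ = exp (s * μ[X] + (b - a) ^ 2 * s ^ 2 / 8) := by rw [← exp_add, add_comm]

theorem integral_exp_mul_integral_rpow_le {Z g : Ω → ℝ} {a b α : ℝ} (hα : 0 < α)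
    (hZ : AEMeasurable Z μ) (hZab : ∀ᵐ ω ∂μ, Z ω ∈ Icc a b) (hg0 : 0 ≤ᵐ[μ] g)
    (hgZ : ∀ᵐ ω ∂μ, g ω ≤ exp (-α⁻¹ * Z ω)) :
    (∫ ω, exp (Z ω) ∂μ) * (∫ ω, g ω ∂μ) ^ α ≤ exp ((b - a) ^ 2 * (α + 1) / (8 * α)) := by
  have hexp : ∫ ω, exp (Z ω) ∂μ ≤ exp (μ[Z] + (b - a) ^ 2 / 8) := by
    simpa using integral_exp_mul_le_of_mem_Icc hZ hZab 1
  have hg : ∫ ω, g ω ∂μ ≤ exp (-α⁻¹ * μ[Z] + (b - a) ^ 2 * (-α⁻¹) ^ 2 / 8) :=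
    (integral_mono_of_nonneg hg0 (integrable_exp_mul_of_mem_Icc hZ hZab) hgZ).trans
      (integral_exp_mul_le_of_mem_Icc hZ hZab _)
  calc (∫ ω, exp (Z ω) ∂μ) * (∫ ω, g ω ∂μ) ^ α
      ≤ exp (μ[Z] + (b - a) ^ 2 / 8) *
          exp (-α⁻¹ * μ[Z] + (b - a) ^ 2 * (-α⁻¹) ^ 2 / 8) ^ α := by
        have := integral_nonneg_of_ae hg0
        gcongr
    _ = exp ((b - a) ^ 2 * (α + 1) / (8 * α)) := by
        rw [← exp_mul, ← exp_add]
        congr 1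
        field_simp
        ring

end Hoeffding

/-- `log (min (exp t) (x ^ (-α)))`, set to `t` at `x = 0` separately since `log 0 = 0`. -/
noncomputable def truncLogRpowNeg (α t x : ℝ) : ℝ :=
  if x = 0 then t else min t (-α * log x)

theorem measurable_truncLogRpowNeg (α t : ℝ) : Measurable (truncLogRpowNeg α t) :=
  Measurable.ite (measurableSet_singleton 0) measurable_const
    (measurable_const.min (measurable_log.const_mul _))

theorem exp_truncLogRpowNeg {α x : ℝ} (t : ℝ) (hx : 0 ≤ x) :
    exp (truncLogRpowNeg α t x) = if x = 0 then exp t else min (exp t) (x ^ (-α)) := by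
  unfold truncLogRpowNeg
  split_ifs with h
  · rfl
  · rw [exp_monotone.map_min, rpow_def_of_pos (hx.lt_of_ne' h), mul_comm]

theorem truncLogRpowNeg_mem_Icc {α t x : ℝ} (hα : 0 ≤ α) (ht : 0 ≤ t) (hx0 : 0 ≤ x)
    (hx1 : x ≤ 1) : truncLogRpowNeg α t x ∈ Icc 0 t := by
  unfold truncLogRpowNeg
  split_ifs
  · exact ⟨ht, le_rfl⟩
  · exact ⟨le_min ht (by nlinarith [log_nonpos hx0 hx1]), min_le_left _ _⟩

theorem le_exp_neg_inv_mul_truncLogRpowNeg {α x : ℝ} (t : ℝ) (hα : 0 < α) (hx : 0 ≤ x) :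
    x ≤ exp (-α⁻¹ * truncLogRpowNeg α t x) := by
  unfold truncLogRpowNeg
  split_ifs with h
  · exact h ▸ (exp_pos _).le
  · calc x = exp (-α⁻¹ * (-α * log x)) := by
          rw [← mul_assoc, neg_mul_neg, inv_mul_cancel₀ hα.ne', one_mul, exp_log (hx.lt_of_ne' h)]
      _ ≤ _ := exp_le_exp.2 (mul_le_mul_of_nonpos_left (min_le_right _ _)
          (neg_nonpos.2 (inv_nonneg.2 hα.le)))

theorem talagrand_inequality {Ω : Type*} [MeasurableSpace Ω] (μ : Measure Ω)
    [IsProbabilityMeasure μ] (g : Ω → ℝ) (hg : Measurable g)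
    (hg0 : ∀ ω, 0 ≤ g ω) (hg1 : ∀ ω, g ω ≤ 1) (t : ℝ) (ht : 0 ≤ t)
    (α : ℝ) (hα : 0 < α) :
    (∫ ω, (if g ω = 0 then Real.exp t else min (Real.exp t) ((g ω) ^ (-α))) ∂μ) *
        (∫ ω, g ω ∂μ) ^ α ≤
      Real.exp (t ^ 2 * (α + 1) / (8 * α)) := by
  simp_rw [← exp_truncLogRpowNeg t (hg0 _)]
  simpa using integral_exp_mul_integral_rpow_le hα
    ((measurable_truncLogRpowNeg α t).comp hg).aemeasurable
    (ae_of_all _ fun ω ↦ truncLogRpowNeg_mem_Icc hα.le ht (hg0 ω) (hg1 ω))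
    (ae_of_all _ hg0) (ae_of_all _ fun ω ↦ le_exp_neg_inv_mul_truncLogRpowNeg t hα (hg0 ω))
end

section
/- (One-dimensional base case) For any measurable A ⊂ [0,1] with vol[A] = σ > 0, any p > 0, t ≥ 0, and α > 0, letting f(x) = min over y∈A of |x-y|^p, we have ∫₀¹ e^{t·f(x)} dx ≤ σ + (1-σ)e^t ≤ σ^{-α}·exp(t²(α+1)/(8α)). -/
/-!
Since `f` vanishes on `A` and is at most `1` on `[0,1]`, the integrand is at most `1` on `A` and
at most `e^t` on the rest of `[0,1]`, which gives the first bound. The quantity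
`σ + (1 - σ) e^t` is the moment generating function of a Bernoulli variable, so Hoeffding's lemma
bounds it by `exp ((1 - σ) t + t² / 8)`. The same bound at `t = -4 (1 - σ)` gives
`log σ ≤ -2 (1 - σ)²`, and then AM–GM yields
`(1 - σ) t ≤ 2α (1 - σ)² + t² / (8α) ≤ -α log σ + t² / (8α)`.
-/

open Real MeasureTheory ProbabilityTheory

section SetIntegral

variable {X : Type*} [MeasurableSpace X] {μ : Measure X} {s t : Set X} {f : X → ℝ}

theorem setIntegral_le_of_le_const_real {c : ℝ} (hs : MeasurableSet s) (hμs : μ s ≠ ⊤)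
    (hf : ∀ x ∈ s, f x ≤ c) (hfint : IntegrableOn f s μ) :
    ∫ x in s, f x ∂μ ≤ c * μ.real s := by
  calc ∫ x in s, f x ∂μ ≤ ∫ _ in s, c ∂μ :=
        setIntegral_mono_on hfint (integrableOn_const hμs) hs hf
    _ = c * μ.real s := by rw [setIntegral_const, smul_eq_mul, mul_comm]

theorem setIntegral_le_of_le_on_inter_of_le_on_sdiff {a b : ℝ} (hs : MeasurableSet s)
    (ht : MeasurableSet t) (hμs : μ s ≠ ⊤) (ha : 0 ≤ a) (hb : 0 ≤ b)
    (hfa : ∀ x ∈ s ∩ t, f x ≤ a) (hfb : ∀ x ∈ s \ t, f x ≤ b) :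
    ∫ x in s, f x ∂μ ≤ a * μ.real (s ∩ t) + b * μ.real (s \ t) := by
  by_cases hf : IntegrableOn f s μ
  · rw [← integral_inter_add_sdiff ht hf]
    exact add_le_add
      (setIntegral_le_of_le_const_real (hs.inter ht)
        (measure_ne_top_of_subset Set.inter_subset_left hμs) hfa
        (hf.mono_set Set.inter_subset_left))
      (setIntegral_le_of_le_const_real (hs.diff ht)
        (measure_ne_top_of_subset Set.sdiff_subset hμs) hfb (hf.mono_set Set.sdiff_subset))
  · rw [integral_undef hf]
    positivity

end SetIntegral

theorem bernoulli_mgf_le {σ : ℝ} (h0 : 0 ≤ σ) (h1 : σ ≤ 1) (t : ℝ) :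
    σ + (1 - σ) * exp t ≤ exp ((1 - σ) * t + t ^ 2 / 8) := by
  set μ := bernoulliMeasure (0 : ℝ) 1 ⟨σ, h0, h1⟩
  have hb : ∀ᵐ x ∂μ, x ∈ Set.Icc (0 : ℝ) 1 := by
    rw [ae_iff]
    exact bernoulliMeasure_apply_of_notMem_of_notMem _ measurableSet_Icc.compl (by simp) (by simp)
  have hoeffding := (hasSubgaussianMGF_of_mem_Icc aemeasurable_id hb).mgf_le t
  simp only [id, mgf, integral_bernoulliMeasure, μ] at hoeffding
  norm_num at hoeffding
  have hcentre : σ + (1 - σ) * exp t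
      = exp ((1 - σ) * t) * (σ * exp (t * (σ - 1)) + (1 - σ) * exp (t * σ)) := by
    rw [mul_add, mul_left_comm, mul_left_comm (exp _) (1 - σ), ← exp_add, ← exp_add,
      show (1 - σ) * t + t * (σ - 1) = 0 by ring, show (1 - σ) * t + t * σ = t by ring,
      exp_zero, mul_one]
  rw [hcentre, exp_add]
  gcongr
  exact hoeffding.trans_eq (by ring_nf)

theorem log_le_neg_two_mul_one_sub_sq {σ : ℝ} (h0 : 0 < σ) (h1 : σ ≤ 1) :
    log σ ≤ -2 * (1 - σ) ^ 2 := by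
  rw [log_le_iff_le_exp h0]
  have hu : 0 ≤ 1 - σ := by linarith
  calc σ ≤ σ + (1 - σ) * exp (-4 * (1 - σ)) := le_add_of_nonneg_right (by positivity)
    _ ≤ exp ((1 - σ) * (-4 * (1 - σ)) + (-4 * (1 - σ)) ^ 2 / 8) := bernoulli_mgf_le h0.le h1 _
    _ = exp (-2 * (1 - σ) ^ 2) := by ring_nf

theorem bernoulli_mgf_le_rpow_mul_exp {σ α : ℝ} (h0 : 0 < σ) (h1 : σ ≤ 1) (hα : 0 < α)
    (t : ℝ) : σ + (1 - σ) * exp t ≤ σ ^ (-α) * exp (t ^ 2 * (α + 1) / (8 * α)) := by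
  rw [rpow_def_of_pos h0, ← exp_add]
  refine (bernoulli_mgf_le h0.le h1 t).trans (exp_le_exp.2 ?_)
  have hlog := mul_le_mul_of_nonneg_left (log_le_neg_two_mul_one_sub_sq h0 h1) hα.le
  have hamgm : (1 - σ) * t ≤ 2 * α * (1 - σ) ^ 2 + t ^ 2 / (8 * α) := by
    have hsq : 2 * α * (1 - σ) ^ 2 + t ^ 2 / (8 * α) - (1 - σ) * t
        = (4 * α * (1 - σ) - t) ^ 2 / (8 * α) := by
      field_simp
      ring
    rw [← sub_nonneg, hsq]
    positivity
  have hsplit : t ^ 2 * (α + 1) / (8 * α) = t ^ 2 / 8 + t ^ 2 / (8 * α) := by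
    field_simp
  linarith

theorem one_dim_exp_moment_bound (A : Set ℝ) (hA : MeasurableSet A)
    (hAsub : A ⊆ Set.Icc 0 1) (σ : ℝ) (hσ : 0 < σ)
    (hvol : volume A = ENNReal.ofReal σ)
    (p : ℝ) (hp : 0 < p) (t : ℝ) (ht : 0 ≤ t) (α : ℝ) (hα : 0 < α)
    (f : ℝ → ℝ) (hf : ∀ x, f x = sInf ((fun y => |x - y| ^ p) '' A)) :
    (∫ x in Set.Icc (0 : ℝ) 1, Real.exp (t * f x)) ≤ σ + (1 - σ) * Real.exp t ∧
      σ + (1 - σ) * Real.exp t ≤ σ ^ (-α) * Real.exp (t ^ 2 * (α + 1) / (8 * α)) := by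
  have hI : volume (Set.Icc (0 : ℝ) 1) ≠ ⊤ := measure_Icc_lt_top.ne
  have hσA : volume.real A = σ := by rw [measureReal_def, hvol, ENNReal.toReal_ofReal hσ.le]
  have hσ1 : σ ≤ 1 := by simpa [hσA] using measureReal_mono hAsub hI
  obtain ⟨y₀, hy₀⟩ : A.Nonempty :=
    nonempty_of_measure_ne_zero (μ := volume) (by simp [hvol, hσ])
  have hf_le (x : ℝ) {y : ℝ} (hy : y ∈ A) : f x ≤ |x - y| ^ p :=
    (hf x).symm ▸ csInf_le ⟨0, by rintro _ ⟨z, -, rfl⟩; positivity⟩ ⟨y, hy, rfl⟩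
  refine ⟨?_, bernoulli_mgf_le_rpow_mul_exp hσ hσ1 hα t⟩
  calc ∫ x in Set.Icc (0 : ℝ) 1, exp (t * f x)
    _ ≤ 1 * volume.real (Set.Icc (0 : ℝ) 1 ∩ A)
          + exp t * volume.real (Set.Icc (0 : ℝ) 1 \ A) := by
      refine setIntegral_le_of_le_on_inter_of_le_on_sdiff measurableSet_Icc hA hI
        zero_le_one (exp_pos t).le (fun x hx => ?_) (fun x hx => ?_)
      · refine exp_le_one_iff.2 (mul_nonpos_of_nonneg_of_nonpos ht ?_)
        simpa [zero_rpow hp.ne'] using hf_le x hx.2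
      · refine exp_le_exp.2 (mul_le_of_le_one_right ht ((hf_le x hy₀).trans ?_))
        exact rpow_le_one (abs_nonneg _) (dist_le_of_mem_Icc_01 hx.1 (hAsub hy₀)) hp.le
    _ = σ + (1 - σ) * exp t := by
      rw [Set.inter_eq_right.2 hAsub, measureReal_sdiff hAsub hA, hσA,
        volume_real_Icc_of_le zero_le_one]
      ring
end

section
/- (Exponential moment bound on the cube) For any measurable A ⊂ [0,1]ⁿ with positive volume, any p > 0, t ≥ 0, α > 0, letting f(x,A) = min_{y∈A} Σᵢ|xᵢ-yᵢ|^p, we have ∫_{[0,1]ⁿ} e^{t·f(x,A)} dx ≤ vol[A]^{-α}·exp(n·t²(α+1)/(8α)). -/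
/-!
Induction on the dimension, after Talagrand. Write a point of `[0,1]^(n+1)` as `x = (ω, z)` with
`ω` its first coordinate, let `A_ω = {z | (ω, z) ∈ A}` and let `B` be the closure of the projection
of `A` to the last `n` coordinates (the projection of a measurable set need not be measurable; its
closure is, and has the same distance function). Then `f(x, A) ≤ f(z, A_ω)` and
`f(x, A) ≤ f(z, B) + 1`, so by the induction hypothesis the integral over `z` is at most
`vol(B)^(-α) e^(n c) h(ω)^(-α)`, where `c = t²(α+1)/(8α)` and `h = max (vol A_ω / vol B) e^(-t/α)`.
Since `∫ h ≥ vol A / vol B`, it remains to prove the one-dimensional inequality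
`∫ h^(-α) ≤ (∫ h)^(-α) e^c`: this is Hoeffding's lemma for `X = -(α/t) log h ∈ [0, 1]`, applied at
the parameters `t` and `-t/α`.
-/

open Real MeasureTheory Set ProbabilityTheory

noncomputable def lpDistPow {n : ℕ} (p : ℝ) (A : Set (Fin n → ℝ)) (x : Fin n → ℝ) : ℝ :=
  sInf ((fun y => ∑ i, |x i - y i| ^ p) '' A)

section lpDistPow

variable {n : ℕ} {p : ℝ} {A B : Set (Fin n → ℝ)} {x y : Fin n → ℝ}

lemma lpDistPow_nonneg (p : ℝ) (A : Set (Fin n → ℝ)) (x : Fin n → ℝ) : 0 ≤ lpDistPow p A x :=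
  Real.sInf_nonneg (by rintro _ ⟨y, -, rfl⟩; positivity)

lemma lpDistPow_le_of_mem (hy : y ∈ A) : lpDistPow p A x ≤ ∑ i, |x i - y i| ^ p :=
  csInf_le ⟨0, by rintro _ ⟨y, -, rfl⟩; positivity⟩ ⟨y, hy, rfl⟩

lemma le_lpDistPow (hA : A.Nonempty) {b : ℝ} (h : ∀ y ∈ A, b ≤ ∑ i, |x i - y i| ^ p) :
    b ≤ lpDistPow p A x :=
  le_csInf (hA.image _) (by rintro _ ⟨y, hy, rfl⟩; exact h y hy)

lemma lpDistPow_le_lpDistPow_of_subset (hBA : B ⊆ A) (hB : B.Nonempty) :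
    lpDistPow p A x ≤ lpDistPow p B x :=
  le_lpDistPow hB fun _ hy => lpDistPow_le_of_mem (hBA hy)

lemma continuous_sum_abs_sub_rpow (hp : 0 ≤ p) :
    Continuous fun q : (Fin n → ℝ) × (Fin n → ℝ) => ∑ i, |q.1 i - q.2 i| ^ p := by
  fun_prop (disch := exact fun _ => Or.inr hp)

lemma lpDistPow_closure (hp : 0 ≤ p) : lpDistPow p (closure A) x = lpDistPow p A x := by
  rcases A.eq_empty_or_nonempty with rfl | hA
  · simp
  refine le_antisymm (lpDistPow_le_lpDistPow_of_subset subset_closure hA)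
    (le_lpDistPow hA.closure fun y hy => ?_)
  refine closure_minimal (fun y hy => lpDistPow_le_of_mem hy) ?_ hy
  exact isClosed_le continuous_const
    ((continuous_sum_abs_sub_rpow hp).comp (Continuous.prodMk_right x))

lemma upperSemicontinuous_lpDistPow (hp : 0 ≤ p) : UpperSemicontinuous (lpDistPow p A) := by
  intro x c hc
  rcases A.eq_empty_or_nonempty with rfl | hA
  · simpa [lpDistPow] using hc
  obtain ⟨_, ⟨y, hy, rfl⟩, hyc⟩ := exists_lt_of_csInf_lt (hA.image _) hc
  have hcont := (continuous_sum_abs_sub_rpow hp).comp (Continuous.prodMk_left y)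
  filter_upwards [hcont.continuousAt.eventually_lt continuousAt_const hyc] with x' hx'
  exact (lpDistPow_le_of_mem hy).trans_lt hx'

lemma lpDistPow_le_card (hp : 0 ≤ p) (hA : A ⊆ Icc 0 1) (hx : x ∈ Icc 0 1) :
    lpDistPow p A x ≤ n := by
  rcases A.eq_empty_or_nonempty with rfl | ⟨y, hy⟩
  · simp [lpDistPow]
  calc lpDistPow p A x ≤ ∑ i, |x i - y i| ^ p := lpDistPow_le_of_mem hy
    _ ≤ ∑ _i : Fin n, (1 : ℝ) := by
        gcongr with i
        exact rpow_le_one (abs_nonneg _)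
          (Real.dist_le_of_mem_Icc_01 ⟨hx.1 i, hx.2 i⟩ ⟨(hA hy).1 i, (hA hy).2 i⟩) hp
    _ = n := by simp

lemma integrableOn_exp_mul_lpDistPow (hp : 0 ≤ p) (hA : A ⊆ Icc 0 1) (t : ℝ) :
    IntegrableOn (fun x => exp (t * lpDistPow p A x)) (Icc 0 1) := by
  refine IntegrableOn.of_bound (by simp [Real.volume_Icc_pi])
    ((upperSemicontinuous_lpDistPow hp).measurable.const_mul t).exp.aestronglyMeasurable
    (exp (|t| * n)) ((ae_restrict_mem measurableSet_Icc).mono fun x hx => ?_)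
  rw [norm_of_nonneg (exp_pos _).le, exp_le_exp]
  calc t * lpDistPow p A x ≤ |t| * lpDistPow p A x :=
        mul_le_mul_of_nonneg_right (le_abs_self t) (lpDistPow_nonneg p A x)
    _ ≤ |t| * n := mul_le_mul_of_nonneg_left (lpDistPow_le_card hp hA hx) (abs_nonneg t)

end lpDistPow

section OneDimensional

variable {Ω : Type*} [MeasurableSpace Ω] {μ : Measure Ω} [IsProbabilityMeasure μ] {X : Ω → ℝ}

lemma mgf_le_exp_of_mem_Icc_zero_one (hX : AEMeasurable X μ) (h01 : ∀ᵐ ω ∂μ, X ω ∈ Icc 0 1)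
    (t : ℝ) : mgf X μ t ≤ exp (t * μ[X] + t ^ 2 / 8) := by
  have h := (hasSubgaussianMGF_of_mem_Icc hX h01).mgf_le t
  have e : mgf (fun ω => X ω - μ[X]) μ t = mgf X μ t * exp (t * -μ[X]) := by
    simpa only [sub_eq_add_neg] using mgf_add_const (X := X) (μ := μ) (t := t) (-μ[X])
  have h' : exp (((‖(1 : ℝ) - 0‖₊ / 2) ^ 2 : NNReal) * t ^ 2 / 2) = exp (t ^ 2 / 8) := by
    congr 1; norm_num; ring
  rw [e, h'] at h
  calc mgf X μ t = mgf X μ t * exp (t * -μ[X]) * exp (t * μ[X]) := by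
        rw [mul_assoc, ← exp_add]; simp
    _ ≤ exp (t ^ 2 / 8) * exp (t * μ[X]) := by gcongr
    _ = exp (t * μ[X] + t ^ 2 / 8) := by rw [← exp_add, add_comm]

lemma mgf_le_mgf_neg_rpow_mul_exp (hX : AEMeasurable X μ) (h01 : ∀ᵐ ω ∂μ, X ω ∈ Icc 0 1)
    {α : ℝ} (hα : 0 < α) (t : ℝ) :
    mgf X μ t ≤ mgf X μ (-(t / α)) ^ (-α) * exp (t ^ 2 * (α + 1) / (8 * α)) := by
  set m := μ[X]
  have hpos : 0 < mgf X μ (-(t / α)) := mgf_pos (integrable_exp_mul_of_mem_Icc hX h01)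
  have hneg : exp (t * m - t ^ 2 / (8 * α)) ≤ mgf X μ (-(t / α)) ^ (-α) := by
    calc exp (t * m - t ^ 2 / (8 * α))
        = exp (-(t / α) * m + (-(t / α)) ^ 2 / 8) ^ (-α) := by
          rw [← exp_mul]; congr 1; field_simp; ring
      _ ≤ mgf X μ (-(t / α)) ^ (-α) :=
          rpow_le_rpow_of_nonpos hpos (mgf_le_exp_of_mem_Icc_zero_one hX h01 _) (by linarith)
  calc mgf X μ t ≤ exp (t * m + t ^ 2 / 8) := mgf_le_exp_of_mem_Icc_zero_one hX h01 t
    _ = exp (t * m - t ^ 2 / (8 * α)) * exp (t ^ 2 * (α + 1) / (8 * α)) := by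
        rw [← exp_add]; congr 1; field_simp; ring
    _ ≤ _ := by gcongr

lemma integral_rpow_neg_le {h : Ω → ℝ} (hh : AEMeasurable h μ) {t α : ℝ} (ht : 0 < t)
    (hα : 0 < α) (h_lower : ∀ ω, exp (-(t / α)) ≤ h ω) (h_upper : ∀ ω, h ω ≤ 1) :
    ∫ ω, h ω ^ (-α) ∂μ ≤ (∫ ω, h ω ∂μ) ^ (-α) * exp (t ^ 2 * (α + 1) / (8 * α)) := by
  have h_pos ω : 0 < h ω := (exp_pos _).trans_le (h_lower ω)
  have hT : 0 < t / α := div_pos ht hα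
  set X := fun ω => -log (h ω) / (t / α)
  have hX01 ω : X ω ∈ Icc 0 1 := by
    have h1 := log_nonpos (h_pos ω).le (h_upper ω)
    have h2 : -(t / α) ≤ log (h ω) := by simpa using log_le_log (exp_pos _) (h_lower ω)
    exact ⟨div_nonneg (by linarith) hT.le, (div_le_one hT).2 (by linarith)⟩
  have hexp_t ω : exp (t * X ω) = h ω ^ (-α) := by
    rw [rpow_def_of_pos (h_pos ω)]; congr 1; simp only [X]; field_simp
  have hexp_neg ω : exp (-(t / α) * X ω) = h ω := by
    rw [← exp_log (h_pos ω)]; congr 1; simp only [X]; field_simp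
  have := mgf_le_mgf_neg_rpow_mul_exp (X := X) (hh.log.neg.div_const _)
    (Filter.Eventually.of_forall hX01) hα t
  simpa only [mgf, hexp_t, hexp_neg] using this

end OneDimensional

def slice {α : Type*} {n : ℕ} (A : Set (Fin (n + 1) → α)) (a : α) : Set (Fin n → α) :=
  {z | Fin.cons a z ∈ A}

section Fubini

variable {α : Type*} [MeasurableSpace α] (ν : Measure α) [SigmaFinite ν] {n : ℕ}

lemma measurePreserving_cons :
    MeasurePreserving (fun q : α × (Fin n → α) => (Fin.cons q.1 q.2 : Fin (n + 1) → α))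
      (ν.prod (Measure.pi fun _ => ν)) (Measure.pi fun _ => ν) := by
  convert (measurePreserving_piFinSuccAbove (fun _ : Fin (n + 1) => ν) 0).symm with q
  simp [Fin.consEquiv]

lemma measurableEmbedding_cons :
    MeasurableEmbedding fun q : α × (Fin n → α) => (Fin.cons q.1 q.2 : Fin (n + 1) → α) := by
  convert (MeasurableEquiv.piFinSuccAbove (fun _ : Fin (n + 1) => α) 0).symm.measurableEmbedding
    with q
  simp [Fin.consEquiv]

lemma measurableSet_slice {A : Set (Fin (n + 1) → α)} (hA : MeasurableSet A) (a : α) :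
    MeasurableSet (slice A a) :=
  (measurableEmbedding_cons.measurable hA).preimage measurable_prodMk_left

lemma measurable_measure_slice {A : Set (Fin (n + 1) → α)} (hA : MeasurableSet A) :
    Measurable fun a => Measure.pi (fun _ => ν) (slice A a) :=
  measurable_measure_prodMk_left ((measurePreserving_cons ν).measurable hA)

lemma pi_apply_eq_lintegral_slice {A : Set (Fin (n + 1) → α)} (hA : MeasurableSet A) :
    Measure.pi (fun _ => ν) A = ∫⁻ a, Measure.pi (fun _ => ν) (slice A a) ∂ν := by
  rw [← (measurePreserving_cons ν).measure_preimage hA.nullMeasurableSet,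
    Measure.prod_apply ((measurePreserving_cons ν).measurable hA)]
  rfl

lemma integral_pi_succ {F : (Fin (n + 1) → α) → ℝ} (hF : Integrable F (Measure.pi fun _ => ν)) :
    ∫ x, F x ∂(Measure.pi fun _ => ν) =
      ∫ a, ∫ z, F (Fin.cons a z) ∂(Measure.pi fun _ => ν) ∂ν := by
  rw [← (measurePreserving_cons ν).integral_comp (measurableEmbedding_cons (n := n)),
    integral_prod]
  exact ((measurePreserving_cons ν).integrable_comp_emb measurableEmbedding_cons).2 hF

end Fubini

section UnitCube

variable {n : ℕ}

lemma restrict_Icc_eq_pi (n : ℕ) :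
    volume.restrict (Icc (0 : Fin n → ℝ) 1) = Measure.pi fun _ => volume.restrict (Icc 0 1) := by
  rw [← pi_univ_Icc, volume_pi, Measure.restrict_pi_pi]
  rfl

instance : IsProbabilityMeasure (volume.restrict (Icc (0 : ℝ) 1)) :=
  ⟨by simp⟩

instance (n : ℕ) : IsProbabilityMeasure (volume.restrict (Icc (0 : Fin n → ℝ) 1)) := by
  rw [restrict_Icc_eq_pi]; infer_instance

lemma volume_ne_top_of_subset_Icc {A : Set (Fin n → ℝ)} (hA : A ⊆ Icc 0 1) : volume A ≠ ⊤ :=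
  ((measure_mono hA).trans_lt (by simp [Real.volume_Icc_pi])).ne

lemma toReal_volume_pos_of_subset_Icc {A : Set (Fin n → ℝ)} (hAsub : A ⊆ Icc 0 1)
    (hApos : 0 < volume A) : 0 < (volume A).toReal :=
  ENNReal.toReal_pos hApos.ne' (volume_ne_top_of_subset_Icc hAsub)

lemma one_le_toReal_volume_rpow_neg {A : Set (Fin n → ℝ)} (hAsub : A ⊆ Icc 0 1)
    (hApos : 0 < volume A) {α : ℝ} (hα : 0 ≤ α) : 1 ≤ (volume A).toReal ^ (-α) := by
  have hA1 : volume A ≤ 1 := by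
    simpa [Real.volume_Icc_pi] using measure_mono (μ := volume) hAsub
  refine one_le_rpow_of_pos_of_le_one_of_nonpos (toReal_volume_pos_of_subset_Icc hAsub hApos) ?_
    (by linarith)
  simpa using ENNReal.toReal_mono ENNReal.one_ne_top hA1

lemma integral_Icc_succ {F : (Fin (n + 1) → ℝ) → ℝ} (hF : IntegrableOn F (Icc 0 1)) :
    ∫ x in Icc 0 1, F x = ∫ ω in Icc 0 1, ∫ z in Icc 0 1, F (Fin.cons ω z) := by
  rw [IntegrableOn, restrict_Icc_eq_pi] at hF
  simp only [restrict_Icc_eq_pi]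
  exact integral_pi_succ _ hF

variable {p : ℝ} {A : Set (Fin (n + 1) → ℝ)} {ω : ℝ}

lemma slice_subset_Icc (hA : A ⊆ Icc 0 1) (ω : ℝ) : slice A ω ⊆ Icc 0 1 :=
  fun _ hz => ⟨fun i => (hA hz).1 i.succ, fun i => (hA hz).2 i.succ⟩

lemma slice_subset_closure_tail (ω : ℝ) : slice A ω ⊆ closure (Fin.tail '' A) :=
  fun z hz => subset_closure ⟨Fin.cons ω z, hz, Fin.tail_cons _ _⟩

lemma closure_tail_subset_Icc (hA : A ⊆ Icc 0 1) : closure (Fin.tail '' A) ⊆ Icc 0 1 :=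
  closure_minimal (image_subset_iff.2 fun _ hx => ⟨fun _ => (hA hx).1 _, fun _ => (hA hx).2 _⟩)
    isClosed_Icc

lemma volume_eq_setLIntegral_slice (hA : MeasurableSet A) (hAsub : A ⊆ Icc 0 1) :
    volume A = ∫⁻ ω in Icc 0 1, volume (slice A ω) := by
  have h := pi_apply_eq_lintegral_slice (volume.restrict (Icc (0 : ℝ) 1)) hA
  simp only [← restrict_Icc_eq_pi, Measure.restrict_eq_self _ hAsub,
    Measure.restrict_eq_self _ (slice_subset_Icc hAsub _)] at h
  exact h

lemma volume_le_volume_closure_tail (hA : MeasurableSet A) (hAsub : A ⊆ Icc 0 1) :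
    volume A ≤ volume (closure (Fin.tail '' A)) := by
  rw [volume_eq_setLIntegral_slice hA hAsub]
  calc ∫⁻ ω in Icc 0 1, volume (slice A ω)
      ≤ ∫⁻ _ in Icc 0 1, volume (closure (Fin.tail '' A)) :=
        lintegral_mono fun ω => measure_mono (slice_subset_closure_tail ω)
    _ = volume (closure (Fin.tail '' A)) := by simp

lemma toReal_volume_eq_setIntegral_slice (hA : MeasurableSet A) (hAsub : A ⊆ Icc 0 1) :
    (volume A).toReal = ∫ ω in Icc 0 1, (volume (slice A ω)).toReal := by
  have hmeas : Measurable fun ω => volume (slice A ω) := measurable_measure_slice volume hA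
  rw [integral_toReal hmeas.aemeasurable, volume_eq_setLIntegral_slice hA hAsub]
  exact .of_forall fun ω => (volume_ne_top_of_subset_Icc (slice_subset_Icc hAsub ω)).lt_top

noncomputable def sliceRatio (A : Set (Fin (n + 1) → ℝ)) (ω : ℝ) : ℝ :=
  (volume (slice A ω)).toReal / (volume (closure (Fin.tail '' A))).toReal

lemma measurable_sliceRatio (hA : MeasurableSet A) : Measurable (sliceRatio A) :=
  (measurable_measure_slice volume hA).ennreal_toReal.div_const _

lemma sliceRatio_le_one (hA : A ⊆ Icc 0 1) (ω : ℝ) : sliceRatio A ω ≤ 1 :=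
  div_le_one_of_le₀ (ENNReal.toReal_mono
    (volume_ne_top_of_subset_Icc (closure_tail_subset_Icc hA))
    (measure_mono (slice_subset_closure_tail ω))) ENNReal.toReal_nonneg

lemma integral_sliceRatio (hA : MeasurableSet A) (hAsub : A ⊆ Icc 0 1) :
    ∫ ω in Icc 0 1, sliceRatio A ω =
      (volume A).toReal / (volume (closure (Fin.tail '' A))).toReal := by
  rw [toReal_volume_eq_setIntegral_slice hA hAsub, ← integral_div]
  rfl

lemma lpDistPow_cons_le_slice (hp : 0 < p) (hne : (slice A ω).Nonempty) (z : Fin n → ℝ) :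
    lpDistPow p A (Fin.cons ω z) ≤ lpDistPow p (slice A ω) z :=
  le_lpDistPow hne fun y hy => (lpDistPow_le_of_mem (A := A) hy).trans_eq <| by
    simp [Fin.sum_univ_succ, zero_rpow hp.ne']

lemma lpDistPow_cons_le_closure_tail (hp : 0 ≤ p) (hA : A ⊆ Icc 0 1) (hω : ω ∈ Icc 0 1)
    (z : Fin n → ℝ) :
    lpDistPow p A (Fin.cons ω z) ≤ lpDistPow p (closure (Fin.tail '' A)) z + 1 := by
  rw [lpDistPow_closure hp, ← sub_le_iff_le_add]
  rcases A.eq_empty_or_nonempty with rfl | hne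
  · simp [lpDistPow]
  refine le_lpDistPow (hne.image _) ?_
  rintro _ ⟨y, hy, rfl⟩
  have h0 : |ω - y 0| ^ p ≤ 1 :=
    rpow_le_one (abs_nonneg _) (Real.dist_le_of_mem_Icc_01 hω ⟨(hA hy).1 0, (hA hy).2 0⟩) hp
  have h := lpDistPow_le_of_mem (p := p) (x := Fin.cons ω z) hy
  simp only [Fin.sum_univ_succ, Fin.cons_zero, Fin.cons_succ] at h
  simp only [Fin.tail]
  linarith

end UnitCube

lemma integral_exp_le_integral_exp {X : Type*} [MeasurableSpace X] {μ : Measure X} {f g : X → ℝ}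
    (hg : Integrable (fun x => exp (g x)) μ) (hfg : ∀ x, f x ≤ g x) :
    ∫ x, exp (f x) ∂μ ≤ ∫ x, exp (g x) ∂μ :=
  integral_mono_of_nonneg (.of_forall fun _ => (exp_pos _).le) hg
    (.of_forall fun x => exp_le_exp.2 (hfg x))

def ExpMomentBound (p t α : ℝ) (n : ℕ) : Prop :=
  ∀ A : Set (Fin n → ℝ), MeasurableSet A → A ⊆ Icc 0 1 → 0 < volume A →
    ∫ x in Icc 0 1, exp (t * lpDistPow p A x) ≤
      (volume A).toReal ^ (-α) * exp (n * t ^ 2 * (α + 1) / (8 * α))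

section Induction

variable {p t α : ℝ} {n : ℕ}

lemma expMomentBound_zero (hα : 0 ≤ α) : ExpMomentBound p t α 0 := by
  intro A _ hAsub hApos
  obtain ⟨y, hy⟩ := nonempty_of_measure_ne_zero hApos.ne'
  have h0 (x : Fin 0 → ℝ) : lpDistPow p A x = 0 :=
    le_antisymm ((lpDistPow_le_of_mem hy).trans_eq (by simp)) (lpDistPow_nonneg _ _ _)
  simp only [h0, mul_zero, exp_zero, integral_const, probReal_univ, one_smul, CharP.cast_eq_zero,
    zero_mul, zero_div, mul_one]
  exact one_le_toReal_volume_rpow_neg hAsub hApos hα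

lemma ExpMomentBound.integral_cons_le (ih : ExpMomentBound p t α n) (hp : 0 < p) (ht : 0 ≤ t)
    (hα : 0 < α) {A : Set (Fin (n + 1) → ℝ)} (hA : MeasurableSet A) (hAsub : A ⊆ Icc 0 1)
    (hB : 0 < volume (closure (Fin.tail '' A))) {ω : ℝ} (hω : ω ∈ Icc 0 1) :
    ∫ z in Icc 0 1, exp (t * lpDistPow p A (Fin.cons ω z)) ≤
      (volume (closure (Fin.tail '' A))).toReal ^ (-α) * exp (n * t ^ 2 * (α + 1) / (8 * α)) *
        max (sliceRatio A ω) (exp (-(t / α))) ^ (-α) := by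
  set B := closure (Fin.tail '' A)
  set E := exp (n * t ^ 2 * (α + 1) / (8 * α))
  have hBsub : B ⊆ Icc 0 1 := closure_tail_subset_Icc hAsub
  have hvB : 0 < (volume B).toReal := toReal_volume_pos_of_subset_Icc hBsub hB
  rcases le_or_gt (sliceRatio A ω) (exp (-(t / α))) with hle | hlt
  · rw [max_eq_right hle, ← exp_mul, show -(t / α) * -α = t by field_simp]
    calc _ ≤ ∫ z in Icc 0 1, exp (t * lpDistPow p B z + t) := by
          refine integral_exp_le_integral_exp ?_ fun z => ?_
          · simpa only [exp_add] using
              (integrableOn_exp_mul_lpDistPow hp.le hBsub t).mul_const (exp t)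
          · nlinarith [lpDistPow_cons_le_closure_tail hp.le hAsub hω z]
      _ = exp t * ∫ z in Icc 0 1, exp (t * lpDistPow p B z) := by
          simp only [exp_add]; rw [integral_mul_const]; ring
      _ ≤ exp t * ((volume B).toReal ^ (-α) * E) := by
          gcongr; exact ih B isClosed_closure.measurableSet hBsub hB
      _ = _ := by ring
  · have hS : 0 < volume (slice A ω) :=
      (ENNReal.toReal_pos_iff.1 ((div_pos_iff_of_pos_right hvB).1 ((exp_pos _).trans hlt))).1
    rw [max_eq_left hlt.le]
    calc _ ≤ ∫ z in Icc 0 1, exp (t * lpDistPow p (slice A ω) z) := by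
          refine integral_exp_le_integral_exp
            (integrableOn_exp_mul_lpDistPow hp.le (slice_subset_Icc hAsub ω) t) fun z => ?_
          exact mul_le_mul_of_nonneg_left
            (lpDistPow_cons_le_slice hp (nonempty_of_measure_ne_zero hS.ne') z) ht
      _ ≤ (volume (slice A ω)).toReal ^ (-α) * E :=
          ih _ (measurableSet_slice hA ω) (slice_subset_Icc hAsub ω) hS
      _ = _ := by
          rw [sliceRatio, div_rpow ENNReal.toReal_nonneg hvB.le]
          field_simp

lemma integral_max_sliceRatio_rpow_neg_le {A : Set (Fin (n + 1) → ℝ)} (hA : MeasurableSet A)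
    (hAsub : A ⊆ Icc 0 1) (hApos : 0 < volume A) (ht : 0 < t) (hα : 0 < α) :
    ∫ ω in Icc 0 1, max (sliceRatio A ω) (exp (-(t / α))) ^ (-α) ≤
      ((volume A).toReal / (volume (closure (Fin.tail '' A))).toReal) ^ (-α) *
        exp (t ^ 2 * (α + 1) / (8 * α)) := by
  set θ := exp (-(t / α))
  set h := fun ω => max (sliceRatio A ω) θ
  have hvA := toReal_volume_pos_of_subset_Icc hAsub hApos
  have hvB := toReal_volume_pos_of_subset_Icc (closure_tail_subset_Icc hAsub)
    (hApos.trans_le (volume_le_volume_closure_tail hA hAsub))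
  have hh_meas : Measurable h := (measurable_sliceRatio hA).max measurable_const
  have hh_ge ω : θ ≤ h ω := le_max_right _ _
  have hh_le ω : h ω ≤ 1 :=
    max_le (sliceRatio_le_one hAsub ω) (exp_le_one_iff.2 (neg_nonpos.2 (by positivity)))
  have hh_int : ∫ ω in Icc 0 1, sliceRatio A ω ≤ ∫ ω in Icc 0 1, h ω :=
    integral_mono_of_nonneg (.of_forall fun _ => div_nonneg ENNReal.toReal_nonneg hvB.le)
      (.of_mem_Icc θ 1 hh_meas.aemeasurable (.of_forall fun ω => ⟨hh_ge ω, hh_le ω⟩))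
      (.of_forall fun ω => le_max_left _ _)
  rw [integral_sliceRatio hA hAsub] at hh_int
  calc ∫ ω in Icc 0 1, h ω ^ (-α)
      ≤ (∫ ω in Icc 0 1, h ω) ^ (-α) * exp (t ^ 2 * (α + 1) / (8 * α)) :=
        integral_rpow_neg_le hh_meas.aemeasurable ht hα hh_ge hh_le
    _ ≤ _ := by
        gcongr ?_ * _
        exact rpow_le_rpow_of_nonpos (div_pos hvA hvB) hh_int (by linarith)

lemma ExpMomentBound.succ (ih : ExpMomentBound p t α n) (hp : 0 < p) (ht : 0 < t) (hα : 0 < α) :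
    ExpMomentBound p t α (n + 1) := by
  intro A hA hAsub hApos
  set B := closure (Fin.tail '' A)
  have hB : 0 < volume B := hApos.trans_le (volume_le_volume_closure_tail hA hAsub)
  set vA := (volume A).toReal
  set vB := (volume B).toReal
  have hvA : 0 < vA := toReal_volume_pos_of_subset_Icc hAsub hApos
  have hvB : 0 < vB := toReal_volume_pos_of_subset_Icc (closure_tail_subset_Icc hAsub) hB
  set C := vB ^ (-α) * exp (n * t ^ 2 * (α + 1) / (8 * α))
  have hrpow_int : Integrable (fun ω => max (sliceRatio A ω) (exp (-(t / α))) ^ (-α))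
      (volume.restrict (Icc 0 1)) := by
    refine .of_mem_Icc 0 (exp (-(t / α)) ^ (-α))
      (((measurable_sliceRatio hA).max measurable_const).pow_const _).aemeasurable
      (.of_forall fun ω => ⟨by positivity, ?_⟩)
    exact rpow_le_rpow_of_nonpos (exp_pos _) (le_max_right _ _) (by linarith)
  calc ∫ x in Icc 0 1, exp (t * lpDistPow p A x)
      = ∫ ω in Icc 0 1, ∫ z in Icc 0 1, exp (t * lpDistPow p A (Fin.cons ω z)) :=
        integral_Icc_succ (integrableOn_exp_mul_lpDistPow hp.le hAsub t)
    _ ≤ ∫ ω in Icc 0 1, C * max (sliceRatio A ω) (exp (-(t / α))) ^ (-α) :=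
        integral_mono_of_nonneg (.of_forall fun _ => integral_nonneg fun _ => (exp_pos _).le)
          (hrpow_int.const_mul C) ((ae_restrict_mem measurableSet_Icc).mono fun ω hω =>
            ih.integral_cons_le hp ht.le hα hA hAsub hB hω)
    _ = C * ∫ ω in Icc 0 1, max (sliceRatio A ω) (exp (-(t / α))) ^ (-α) :=
        integral_const_mul _ _
    _ ≤ C * ((vA / vB) ^ (-α) * exp (t ^ 2 * (α + 1) / (8 * α))) := by
        gcongr C * ?_
        exact integral_max_sliceRatio_rpow_neg_le hA hAsub hApos ht hα
    _ = vA ^ (-α) * exp ((n + 1 : ℕ) * t ^ 2 * (α + 1) / (8 * α)) := by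
        rw [div_rpow hvA.le hvB.le, Nat.cast_succ, add_mul, add_mul, add_div, exp_add, one_mul]
        simp only [C]
        field_simp

end Induction

theorem expMomentBound {p t α : ℝ} (hp : 0 < p) (ht : 0 < t) (hα : 0 < α) (n : ℕ) :
    ExpMomentBound p t α n := by
  induction n with
  | zero => exact expMomentBound_zero hα.le
  | succ n ih => exact ih.succ hp ht hα

theorem cube_exp_moment_bound (n : ℕ) (A : Set (Fin n → ℝ))
    (hA : MeasurableSet A) (hAsub : A ⊆ Set.Icc 0 1)
    (hApos : 0 < volume A)
    (p : ℝ) (hp : 0 < p) (t : ℝ) (ht : 0 ≤ t) (α : ℝ) (hα : 0 < α)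
    (f : (Fin n → ℝ) → ℝ)
    (hf : ∀ x, f x = sInf ((fun y => ∑ i, |x i - y i| ^ p) '' A)) :
    (∫ x in Set.Icc (0 : Fin n → ℝ) 1, Real.exp (t * f x)) ≤
      (volume A).toReal ^ (-α) * Real.exp (n * t ^ 2 * (α + 1) / (8 * α)) := by
  obtain rfl : f = lpDistPow p A := funext hf
  rcases ht.eq_or_lt with rfl | ht
  · simpa using one_le_toReal_volume_rpow_neg hAsub hApos hα.le
  · exact expMomentBound hp ht hα n A hA hAsub hApos
end

section
/- (Concentration for ℓ_p expansion, small p) For any measurable A ⊂ [0,1]ⁿ with vol[A] > 0 and any p > 0, the ℓ_p ε-expansion satisfies vol[A(ε, d_p)] ≥ 1 - exp(-ε^{2p}/n)/vol[A]. -/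
open Real MeasureTheory

/-- The ℓ_p distance on ℝⁿ (for p > 0). -/
noncomputable def lpDist {n : ℕ} (p : ℝ) (x y : Fin n → ℝ) : ℝ :=
  (∑ i, |x i - y i| ^ p) ^ (1 / p)

/-!
Let `f x = inf_{y ∈ A} ∑ᵢ min (|xᵢ - yᵢ| ^ p) 1`. On the cube, `f x < ε ^ p` forces
`d_p(x, A) ≤ ε`; moreover `f` vanishes on `A` and changing one coordinate of `x` changes `f` by at
most `1`. McDiarmid's inequality, in its moment-generating-function form
`E exp (t (f - E f)) ≤ exp (n t² / 8)` for the uniform measure on the cube, combined with the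
Chernoff bounds at `t` and `-t`, gives `vol {f ≤ 0} · vol {f ≥ D} ≤ exp (n t² / 4 - t D)`, which is
`exp (-D² / n)` for the optimal `t = 2 D / n`. Take `D = ε ^ p`.
-/

open ProbabilityTheory

section FinCons

variable {n : ℕ} {E : Fin (n + 1) → Type*} [∀ i, MeasurableSpace (E i)]

lemma measurable_fin_cons_uncurry :
    Measurable fun q : E 0 × ((i : Fin n) → E i.succ) =>
      (Fin.cons q.1 q.2 : (i : Fin (n + 1)) → E i) := by
  refine measurable_pi_iff.2 fun i => Fin.cases ?_ (fun j => ?_) i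
  · exact measurable_fst
  · exact (measurable_pi_apply j).comp measurable_snd

lemma integral_pi_fin_succ (μ : (i : Fin (n + 1)) → Measure (E i)) [∀ i, SigmaFinite (μ i)]
    {F : ((i : Fin (n + 1)) → E i) → ℝ} (hF : Integrable F (Measure.pi μ)) :
    ∫ y, F y ∂Measure.pi μ = ∫ x, ∫ s, F (Fin.cons s x) ∂μ 0 ∂Measure.pi fun i => μ i.succ := by
  have hpres := (measurePreserving_piFinSuccAbove μ 0).symm
  have hcons : ⇑(MeasurableEquiv.piFinSuccAbove E 0).symm = fun q => Fin.cons q.1 q.2 := by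
    funext q
    simp_rw [MeasurableEquiv.piFinSuccAbove_symm_apply, Fin.insertNthEquiv, Fin.insertNth_zero,
      Equiv.coe_fn_mk]
    rfl
  rw [← hpres.integral_comp', hcons]
  rw [hcons] at hpres
  exact integral_prod_symm _ (hpres.integrable_comp_of_integrable hF)

variable {μ₀ : Measure (E 0)} [IsProbabilityMeasure μ₀] {f : ((i : Fin (n + 1)) → E i) → ℝ}
  {a b : ℝ}

lemma integrable_cons (hf : Measurable f) (hf_mem : ∀ x, f x ∈ Set.Icc a b)
    (x : (i : Fin n) → E i.succ) : Integrable (fun s => f (Fin.cons s x)) μ₀ :=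
  .of_mem_Icc a b ((hf.comp measurable_fin_cons_uncurry).comp measurable_prodMk_right).aemeasurable
    (ae_of_all _ fun _ => hf_mem _)

lemma measurable_integral_cons (hf : Measurable f) :
    Measurable fun x : (i : Fin n) → E i.succ => ∫ s, f (Fin.cons s x) ∂μ₀ :=
  (hf.comp measurable_fin_cons_uncurry).stronglyMeasurable.integral_prod_left'.measurable

lemma integral_cons_mem_Icc (hf : Measurable f) (hf_mem : ∀ x, f x ∈ Set.Icc a b)
    (x : (i : Fin n) → E i.succ) : ∫ s, f (Fin.cons s x) ∂μ₀ ∈ Set.Icc a b :=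
  have hint : Integrable (fun s => f (Fin.cons s x)) μ₀ := integrable_cons hf hf_mem x
  ⟨by simpa using integral_mono (integrable_const a) hint fun s => (hf_mem _).1,
    by simpa using integral_mono hint (integrable_const b) fun s => (hf_mem _).2⟩

end FinCons

def HasBoundedDifferences {ι : Type*} {E : ι → Type*} (f : ((i : ι) → E i) → ℝ) (c : ℝ) : Prop :=
  ∀ i (x y : (i : ι) → E i), (∀ j, j ≠ i → x j = y j) → f x - f y ≤ c

namespace HasBoundedDifferences

lemma ciInf {ι κ : Type*} [Nonempty κ] {E : ι → Type*} {F : κ → ((i : ι) → E i) → ℝ}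
    (hbdd : ∀ x, BddBelow (Set.range fun k => F k x)) {c : ℝ}
    (hF : ∀ k, HasBoundedDifferences (F k) c) :
    HasBoundedDifferences (fun x => ⨅ k, F k x) c := by
  intro i x y hxy
  have : (⨅ k, F k x) - c ≤ ⨅ k, F k y :=
    le_ciInf fun k => by linarith [ciInf_le (hbdd x) k, hF k i x y hxy]
  linarith

variable {n : ℕ} {E : Fin (n + 1) → Type*} {f : ((i : Fin (n + 1)) → E i) → ℝ} {c : ℝ}

lemma sub_le_cons (hf : HasBoundedDifferences f c) (x : (i : Fin n) → E i.succ) (s s' : E 0) :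
    f (Fin.cons s x) - f (Fin.cons s' x) ≤ c :=
  hf 0 _ _ fun j hj => by
    obtain ⟨k, rfl⟩ := Fin.exists_succ_eq.2 hj
    simp

lemma integral_cons [∀ i, MeasurableSpace (E i)] {μ₀ : Measure (E 0)} [IsProbabilityMeasure μ₀]
    (hf : HasBoundedDifferences f c)
    (hint : ∀ x : (i : Fin n) → E i.succ, Integrable (fun s => f (Fin.cons s x)) μ₀) :
    HasBoundedDifferences (fun x : (i : Fin n) → E i.succ => ∫ s, f (Fin.cons s x) ∂μ₀) c := by
  intro i x y hxy
  rw [← integral_sub (hint x) (hint y)]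
  refine (integral_mono (hint x |>.sub (hint y)) (integrable_const c) fun s => ?_).trans_eq
    (by simp)
  refine hf i.succ _ _ fun j hj => Fin.cases (by simp) (fun k hk => ?_) j hj
  simpa using hxy k (fun h => hk (h ▸ rfl))

end HasBoundedDifferences

lemma mgf_le_of_sub_le {Ω : Type*} {mΩ : MeasurableSpace Ω} {μ : Measure Ω}
    [IsProbabilityMeasure μ] {Z : Ω → ℝ} (hZ : Measurable Z) {c : ℝ}
    (hc : ∀ ω ω', Z ω - Z ω' ≤ c) (t : ℝ) :
    mgf Z μ t ≤ exp (t * μ[Z] + c ^ 2 * t ^ 2 / 8) := by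
  obtain ⟨ω₀⟩ := nonempty_of_isProbabilityMeasure μ
  have : Nonempty Ω := ⟨ω₀⟩
  have hbdd : BddBelow (Set.range Z) := ⟨Z ω₀ - c, by rintro _ ⟨ω, rfl⟩; linarith [hc ω₀ ω]⟩
  have hmem : ∀ ω, Z ω ∈ Set.Icc (⨅ ω, Z ω) ((⨅ ω, Z ω) + c) := fun ω =>
    ⟨ciInf_le hbdd ω, by linarith [le_ciInf fun ω' => (by linarith [hc ω ω'] : Z ω - c ≤ Z ω')]⟩
  have hoeffding := (hasSubgaussianMGF_of_mem_Icc hZ.aemeasurable (ae_of_all μ hmem)).mgf_le t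
  have hparam : (((‖(⨅ ω, Z ω) + c - ⨅ ω, Z ω‖₊ / 2) ^ 2 : NNReal) : ℝ) = c ^ 2 / 4 := by
    norm_num [div_pow]
  calc mgf Z μ t = mgf (fun ω => Z ω - μ[Z]) μ t * exp (t * μ[Z]) := by
        rw [← mgf_add_const]; simp
    _ ≤ exp (c ^ 2 / 4 * t ^ 2 / 2) * exp (t * μ[Z]) := by
        rw [← hparam]; gcongr
    _ = exp (t * μ[Z] + c ^ 2 * t ^ 2 / 8) := by rw [← exp_add]; ring_nf

/-- McDiarmid's inequality, in moment-generating-function form. -/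
theorem mgf_le_of_hasBoundedDifferences {n : ℕ} {E : Fin n → Type*} [∀ i, MeasurableSpace (E i)]
    (μ : (i : Fin n) → Measure (E i)) [∀ i, IsProbabilityMeasure (μ i)]
    {f : ((i : Fin n) → E i) → ℝ} (hf : Measurable f) {a b : ℝ} (hf_mem : ∀ x, f x ∈ Set.Icc a b)
    {c : ℝ} (hfc : HasBoundedDifferences f c) (t : ℝ) :
    mgf f (Measure.pi μ) t ≤ exp (t * (Measure.pi μ)[f] + n * c ^ 2 * t ^ 2 / 8) := by
  induction n with
  | zero =>
    have hconst : f = fun _ => f default := funext fun x => congrArg f (Subsingleton.elim _ _)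
    rw [hconst]
    simp
  | succ n ih =>
    set μ' := Measure.pi fun i : Fin n => μ i.succ
    set g := fun x : (i : Fin n) → E i.succ => ∫ s, f (Fin.cons s x) ∂μ 0
    have hg_meas : Measurable g := measurable_integral_cons hf
    have hg_mem : ∀ x, g x ∈ Set.Icc a b := integral_cons_mem_Icc hf hf_mem
    have hf_int : Integrable f (Measure.pi μ) :=
      .of_mem_Icc a b hf.aemeasurable (ae_of_all _ hf_mem)
    have hexp_int : Integrable (fun y => exp (t * f y)) (Measure.pi μ) :=
      integrable_exp_mul_of_mem_Icc hf.aemeasurable (ae_of_all _ hf_mem)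
    have hslice (x) :
        ∫ s, exp (t * f (Fin.cons s x)) ∂μ 0 ≤ exp (c ^ 2 * t ^ 2 / 8) * exp (t * g x) := by
      rw [← exp_add, add_comm (c ^ 2 * t ^ 2 / 8)]
      exact mgf_le_of_sub_le ((hf.comp measurable_fin_cons_uncurry).comp measurable_prodMk_right)
        (hfc.sub_le_cons x) t
    calc mgf f (Measure.pi μ) t = ∫ x, ∫ s, exp (t * f (Fin.cons s x)) ∂μ 0 ∂μ' :=
          integral_pi_fin_succ μ hexp_int
      _ ≤ ∫ x, exp (c ^ 2 * t ^ 2 / 8) * exp (t * g x) ∂μ' :=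
          integral_mono_of_nonneg (ae_of_all _ fun x => integral_nonneg fun s => (exp_pos _).le)
            ((integrable_exp_mul_of_mem_Icc hg_meas.aemeasurable (ae_of_all _ hg_mem)).const_mul _)
            (ae_of_all _ hslice)
      _ = exp (c ^ 2 * t ^ 2 / 8) * mgf g μ' t := integral_const_mul _ _
      _ ≤ exp (c ^ 2 * t ^ 2 / 8) * exp (t * μ'[g] + n * c ^ 2 * t ^ 2 / 8) := by
          gcongr; exact ih _ hg_meas hg_mem (hfc.integral_cons (integrable_cons hf hf_mem))
      _ = exp (t * (Measure.pi μ)[f] + (n + 1 : ℕ) * c ^ 2 * t ^ 2 / 8) := by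
          rw [integral_pi_fin_succ μ hf_int, ← exp_add]
          congr 1
          push_cast
          ring

lemma measureReal_nonpos_mul_measureReal_ge_le {Ω : Type*} {mΩ : MeasurableSpace Ω}
    {μ : Measure Ω} [IsFiniteMeasure μ] {X : Ω → ℝ} {m K : ℝ} (hK : 0 ≤ K)
    (hint : ∀ t, Integrable (fun ω => exp (t * X ω)) μ)
    (hmgf : ∀ t, mgf X μ t ≤ exp (t * m + K * t ^ 2 / 8)) {D : ℝ} (hD : 0 ≤ D) :
    μ.real {ω | X ω ≤ 0} * μ.real {ω | D ≤ X ω} ≤ exp (-D ^ 2 / K) := by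
  set t := 2 * D / K
  have ht : 0 ≤ t := by positivity
  have hlow : μ.real {ω | X ω ≤ 0} ≤ mgf X μ (-t) := by
    simpa using measure_le_le_exp_mul_mgf 0 (neg_nonpos.2 ht) (hint (-t))
  have hhigh : μ.real {ω | D ≤ X ω} ≤ exp (-t * D) * mgf X μ t :=
    measure_ge_le_exp_mul_mgf D ht (hint t)
  have hexponent :
      -t * m + K * (-t) ^ 2 / 8 + (-t * D + (t * m + K * t ^ 2 / 8)) = -D ^ 2 / K := by
    rcases hK.eq_or_lt with rfl | hKpos
    · simp [t]
    · simp only [t]; field_simp; ring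
  calc μ.real {ω | X ω ≤ 0} * μ.real {ω | D ≤ X ω}
      ≤ mgf X μ (-t) * (exp (-t * D) * mgf X μ t) := by gcongr; exact mgf_nonneg
    _ ≤ exp (-t * m + K * (-t) ^ 2 / 8) * (exp (-t * D) * exp (t * m + K * t ^ 2 / 8)) := by
        have : 0 ≤ exp (-t * D) * mgf X μ t := mul_nonneg (exp_pos _).le mgf_nonneg
        gcongr <;> exact hmgf _
    _ = exp (-D ^ 2 / K) := by rw [← exp_add, ← exp_add, hexponent]

theorem measureReal_nonpos_mul_measureReal_ge_le_of_hasBoundedDifferences {n : ℕ}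
    {E : Fin n → Type*} [∀ i, MeasurableSpace (E i)]
    (μ : (i : Fin n) → Measure (E i)) [∀ i, IsProbabilityMeasure (μ i)]
    {f : ((i : Fin n) → E i) → ℝ} (hf : Measurable f) {a b : ℝ} (hf_mem : ∀ x, f x ∈ Set.Icc a b)
    {c : ℝ} (hfc : HasBoundedDifferences f c) {D : ℝ} (hD : 0 ≤ D) :
    (Measure.pi μ).real {x | f x ≤ 0} * (Measure.pi μ).real {x | D ≤ f x} ≤
      exp (-D ^ 2 / (n * c ^ 2)) :=
  measureReal_nonpos_mul_measureReal_ge_le (by positivity)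
    (fun _ => integrable_exp_mul_of_mem_Icc hf.aemeasurable (ae_of_all _ hf_mem))
    (fun t => (mgf_le_of_hasBoundedDifferences μ hf hf_mem hfc t).trans_eq (by ring_nf)) hD

section TruncatedLpCost

variable {ι : Type*} [Fintype ι] (p : ℝ)

/-- Truncating each term at `1` gives bounded differences on all of `ι → ℝ` without changing the
cost on the unit cube. -/
noncomputable def truncatedLpCost (x y : ι → ℝ) : ℝ := ∑ i, min (|x i - y i| ^ p) 1

/-- For empty `A` this is the junk value `sInf ∅ = 0`. -/
noncomputable def infTruncatedLpCost (A : Set (ι → ℝ)) (x : ι → ℝ) : ℝ :=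
  ⨅ y : A, truncatedLpCost p x y

variable {p}

lemma truncatedLpCost_mem_Icc (x y : ι → ℝ) :
    truncatedLpCost p x y ∈ Set.Icc 0 (Fintype.card ι : ℝ) := by
  refine ⟨Finset.sum_nonneg fun i _ => le_min (by positivity) zero_le_one, ?_⟩
  exact (Finset.sum_le_sum fun i _ => min_le_right _ _).trans_eq (by simp)

lemma truncatedLpCost_self (hp : p ≠ 0) (x : ι → ℝ) : truncatedLpCost p x x = 0 := by
  simp [truncatedLpCost, zero_rpow hp]

lemma truncatedLpCost_eq_of_mem_Icc (hp : 0 ≤ p) {x y : ι → ℝ} (hx : x ∈ Set.Icc 0 1)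
    (hy : y ∈ Set.Icc 0 1) : truncatedLpCost p x y = ∑ i, |x i - y i| ^ p := by
  refine Finset.sum_congr rfl fun i _ => min_eq_left (rpow_le_one (abs_nonneg _) ?_ hp)
  have hx0 : 0 ≤ x i := hx.1 i
  have hx1 : x i ≤ 1 := hx.2 i
  have hy0 : 0 ≤ y i := hy.1 i
  have hy1 : y i ≤ 1 := hy.2 i
  exact abs_le.2 ⟨by linarith, by linarith⟩

lemma continuous_truncatedLpCost_left (hp : 0 ≤ p) (y : ι → ℝ) :
    Continuous fun x => truncatedLpCost p x y :=
  continuous_finsetSum _ fun i _ =>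
    ((continuous_rpow_const hp).comp ((continuous_apply i).sub continuous_const).abs).min
      continuous_const

lemma hasBoundedDifferences_truncatedLpCost_left (y : ι → ℝ) :
    HasBoundedDifferences (fun x => truncatedLpCost p x y) 1 := by
  classical
  intro i x x' hxx'
  simp only [truncatedLpCost, ← Finset.add_sum_erase _ _ (Finset.mem_univ i)]
  rw [Finset.sum_congr rfl fun j hj => by rw [hxx' j (Finset.ne_of_mem_erase hj)]]
  have := min_le_right (|x i - y i| ^ p) 1
  have := le_min (rpow_nonneg (abs_nonneg (x' i - y i)) p) zero_le_one
  linarith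

variable {A : Set (ι → ℝ)}

lemma bddBelow_range_truncatedLpCost (x : ι → ℝ) :
    BddBelow (Set.range fun y : A => truncatedLpCost p x y) :=
  ⟨0, by rintro _ ⟨y, rfl⟩; exact (truncatedLpCost_mem_Icc x y).1⟩

lemma infTruncatedLpCost_mem_Icc (hA : A.Nonempty) (x : ι → ℝ) :
    infTruncatedLpCost p A x ∈ Set.Icc 0 (Fintype.card ι : ℝ) :=
  have : Nonempty A := hA.to_subtype
  ⟨le_ciInf fun y => (truncatedLpCost_mem_Icc x y).1,
    (ciInf_le (bddBelow_range_truncatedLpCost x) ⟨_, hA.some_mem⟩).trans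
      (truncatedLpCost_mem_Icc _ _).2⟩

lemma infTruncatedLpCost_nonpos_of_mem (hp : p ≠ 0) {x : ι → ℝ} (hx : x ∈ A) :
    infTruncatedLpCost p A x ≤ 0 :=
  (ciInf_le (bddBelow_range_truncatedLpCost x) ⟨x, hx⟩).trans_eq (truncatedLpCost_self hp x)

lemma measurable_infTruncatedLpCost (hp : 0 ≤ p) : Measurable (infTruncatedLpCost p A) := by
  have := upperSemicontinuous_ciInf (bddBelow_range_truncatedLpCost (A := A)) fun y =>
    (continuous_truncatedLpCost_left hp (y : ι → ℝ)).upperSemicontinuous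
  exact this.measurable

lemma hasBoundedDifferences_infTruncatedLpCost (hA : A.Nonempty) :
    HasBoundedDifferences (infTruncatedLpCost p A) 1 := by
  have : Nonempty A := hA.to_subtype
  exact HasBoundedDifferences.ciInf (bddBelow_range_truncatedLpCost (A := A)) fun y =>
    hasBoundedDifferences_truncatedLpCost_left (y : ι → ℝ)

end TruncatedLpCost

instance : IsProbabilityMeasure (volume.restrict (Set.Icc (0 : ℝ) 1)) := ⟨by simp⟩

lemma pi_volume_restrict_unit_Icc_apply {ι : Type*} [Fintype ι] (s : Set (ι → ℝ)) :
    (Measure.pi fun _ : ι => volume.restrict (Set.Icc (0 : ℝ) 1)) s =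
      volume (s ∩ Set.Icc 0 1) := by
  rw [← Measure.restrict_apply' measurableSet_Icc, ← Set.pi_univ_Icc, volume_pi,
    Measure.restrict_pi_pi]
  rfl

lemma exists_lpDist_le_of_infTruncatedLpCost_lt {n : ℕ} {p ε : ℝ} (hp : 0 < p) (hε : 0 ≤ ε)
    {A : Set (Fin n → ℝ)} (hA : A.Nonempty) (hA_sub : A ⊆ Set.Icc 0 1) {x : Fin n → ℝ}
    (hx : x ∈ Set.Icc 0 1) (h : infTruncatedLpCost p A x < ε ^ p) :
    ∃ y ∈ A, lpDist p x y ≤ ε := by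
  have : Nonempty A := hA.to_subtype
  obtain ⟨⟨y, hyA⟩, hy⟩ := exists_lt_of_ciInf_lt h
  rw [truncatedLpCost_eq_of_mem_Icc hp.le hx (hA_sub hyA)] at hy
  refine ⟨y, hyA, ?_⟩
  calc lpDist p x y ≤ (ε ^ p) ^ (1 / p) :=
        rpow_le_rpow (Finset.sum_nonneg fun i _ => by positivity) hy.le (by positivity)
    _ = ε := by rw [one_div, rpow_rpow_inv hε hp.ne']

theorem volume_toReal_mul_one_sub_volume_toReal_lpExpansion_le {n : ℕ} {A : Set (Fin n → ℝ)}
    (hA : A.Nonempty) (hA_sub : A ⊆ Set.Icc 0 1) {p : ℝ} (hp : 0 < p) {ε : ℝ} (hε : 0 ≤ ε) :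
    (volume A).toReal *
        (1 - (volume {x ∈ Set.Icc (0 : Fin n → ℝ) 1 | ∃ y ∈ A, lpDist p x y ≤ ε}).toReal) ≤
      exp (-ε ^ (2 * p) / n) := by
  set μ := Measure.pi fun _ : Fin n => volume.restrict (Set.Icc (0 : ℝ) 1)
  set f := infTruncatedLpCost p A
  set S := {x ∈ Set.Icc (0 : Fin n → ℝ) 1 | ∃ y ∈ A, lpDist p x y ≤ ε}
  have hf : Measurable f := measurable_infTruncatedLpCost hp.le
  have hconc : μ.real {x | f x ≤ 0} * μ.real {x | ε ^ p ≤ f x} ≤ exp (-ε ^ (2 * p) / n) := by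
    have h := measureReal_nonpos_mul_measureReal_ge_le_of_hasBoundedDifferences
      (fun _ => volume.restrict (Set.Icc (0 : ℝ) 1)) hf
      (infTruncatedLpCost_mem_Icc hA) (hasBoundedDifferences_infTruncatedLpCost hA)
      (rpow_nonneg hε p)
    rwa [← rpow_natCast, ← rpow_mul hε, mul_comm p, one_pow, mul_one, Nat.cast_ofNat] at h
  have hμA : (volume A).toReal ≤ μ.real {x | f x ≤ 0} := by
    rw [← Set.inter_eq_left.2 hA_sub, ← pi_volume_restrict_unit_Icc_apply]
    exact measureReal_mono fun x hx => infTruncatedLpCost_nonpos_of_mem hp.ne' hx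
  have hμS : 1 - (volume S).toReal ≤ μ.real {x | ε ^ p ≤ f x} := by
    have hsub : {x | f x < ε ^ p} ∩ Set.Icc 0 1 ⊆ S := fun x ⟨hfx, hx⟩ =>
      ⟨hx, exists_lpDist_le_of_infTruncatedLpCost_lt hp hε hA hA_sub hx hfx⟩
    have hS_fin : volume S ≠ ⊤ :=
      measure_ne_top_of_subset (fun x (hx : x ∈ S) => hx.1) isCompact_Icc.measure_lt_top.ne
    have hlt : μ.real {x | f x < ε ^ p} ≤ (volume S).toReal := by
      rw [measureReal_def, pi_volume_restrict_unit_Icc_apply]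
      exact ENNReal.toReal_mono hS_fin (measure_mono hsub)
    have hcompl : {x | ε ^ p ≤ f x} = {x | f x < ε ^ p}ᶜ := by ext; simp
    rw [hcompl, probReal_compl_eq_one_sub (measurableSet_lt hf measurable_const)]
    linarith
  calc (volume A).toReal * (1 - (volume S).toReal)
      ≤ (volume A).toReal * μ.real {x | ε ^ p ≤ f x} :=
        mul_le_mul_of_nonneg_left hμS ENNReal.toReal_nonneg
    _ ≤ μ.real {x | f x ≤ 0} * μ.real {x | ε ^ p ≤ f x} :=
        mul_le_mul_of_nonneg_right hμA measureReal_nonneg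
    _ ≤ exp (-ε ^ (2 * p) / n) := hconc

theorem lp_expansion_concentration_general (n : ℕ) (A : Set (Fin n → ℝ))
    (hAsub : A ⊆ Set.Icc 0 1)
    (hApos : 0 < (volume A).toReal)
    (p : ℝ) (hp : 0 < p) (ε : ℝ) (hε : 0 ≤ ε) :
    volume {x ∈ Set.Icc (0 : Fin n → ℝ) 1 | ∃ y ∈ A, lpDist p x y ≤ ε} ≥
      ENNReal.ofReal (1 - Real.exp (-ε ^ (2 * p) / n) / (volume A).toReal) := by
  have hA : A.Nonempty := nonempty_of_measure_ne_zero (ENNReal.toReal_pos_iff.1 hApos).1.ne'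
  have h := volume_toReal_mul_one_sub_volume_toReal_lpExpansion_le hA hAsub hp hε
  refine ENNReal.ofReal_le_of_le_toReal ?_
  rw [sub_le_comm, le_div_iff₀ hApos]
  linarith

theorem lp_expansion_concentration (n : ℕ) (A : Set (Fin n → ℝ))
    (hA : MeasurableSet A) (hAsub : A ⊆ Set.Icc 0 1)
    (hApos : 0 < (volume A).toReal)
    (p : ℝ) (hp : 0 < p) (ε : ℝ) (hε : 0 ≤ ε) :
    volume {x ∈ Set.Icc (0 : Fin n → ℝ) 1 | ∃ y ∈ A, lpDist p x y ≤ ε} ≥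
      ENNReal.ofReal (1 - Real.exp (-ε ^ (2 * p) / n) / (volume A).toReal) :=
  lp_expansion_concentration_general n A hAsub hApos p hp ε hε
end

section
/- (Hamming concentration) For any measurable A ⊂ [0,1]ⁿ with vol[A] > 0 and integer ε ≥ 0, the ℓ₀ (Hamming) ε-expansion satisfies vol[A(ε, d₀)] ≥ 1 - exp(-ε²/n)/vol[A]. -/
open Real MeasureTheory

/-- The Hamming (ℓ₀) distance on ℝⁿ: the number of differing coordinates. -/
noncomputable def l0Dist {n : ℕ} (x y : Fin n → ℝ) : ℕ :=
  (Finset.univ.filter fun i => x i ≠ y i).card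

/-!
Talagrand's exponential inequality for the Hamming distance: for a compact set `K` in a product
of `n` probability spaces, `P(K) · E[e ^ (λ d(x, K))] ≤ e ^ (n λ² / 4)`. It is proved by induction
on `n`, splitting off the first coordinate `t`: the integrand at `(t, z)` is bounded through the
slice `K_t`, and also, at the cost of one more differing coordinate, through the projection `K'`
of `K`. With `g = P(K_t) / P(K')` the induction hypothesis gives the factor `min (1 / g) e^λ`,
which lies below the chord `1 + e^λ (1 - g)`, and `∫ g · (1 + e^λ (1 - ∫ g)) ≤ cosh² (λ / 2)
≤ e ^ (λ² / 4)`. Markov's inequality with `λ = 2ε / n` bounds the mass of the points at distance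
`> ε` from `K` by `e ^ (-ε² / n) / P(K)`, and inner regularity passes from compact sets to `A`.
-/

open scoped ENNReal NNReal

section Hamming

variable {ι β : Type*} [Fintype ι] [DecidableEq ι] [DecidableEq β]

def hammingCthickening (m : ℕ) (A : Set (ι → β)) : Set (ι → β) :=
  {x | ∃ y ∈ A, hammingDist x y ≤ m}

theorem hammingDist_le_iff_exists_restrict_eq {x y : ι → β} {m : ℕ} :
    hammingDist x y ≤ m ↔ ∃ s : Finset ι, sᶜ.card ≤ m ∧ s.restrict x = s.restrict y := by
  constructor
  · intro h
    refine ⟨Finset.univ.filter fun i => x i = y i, ?_, funext fun i => (Finset.mem_filter.1 i.2).2⟩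
    simpa [Finset.compl_filter, hammingDist] using h
  · rintro ⟨s, hs, hxy⟩
    refine le_trans (Finset.card_le_card fun i hi => ?_) hs
    rw [Finset.mem_compl]
    exact fun his => (Finset.mem_filter.1 hi).2 (congrFun hxy ⟨i, his⟩)

theorem hammingCthickening_eq_biUnion (m : ℕ) (A : Set (ι → β)) :
    hammingCthickening m A =
      ⋃ (s : Finset ι) (_ : sᶜ.card ≤ m), s.restrict ⁻¹' (s.restrict '' A) := by
  ext x
  simp only [hammingCthickening, hammingDist_le_iff_exists_restrict_eq,
    Set.mem_ofPred_eq, Set.mem_iUnion, Set.mem_preimage, Set.mem_image]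
  grind

theorem IsCompact.isClosed_hammingCthickening [TopologicalSpace β] [T2Space β]
    {K : Set (ι → β)} (hK : IsCompact K) (m : ℕ) : IsClosed (hammingCthickening m K) := by
  rw [hammingCthickening_eq_biUnion]
  exact isClosed_iUnion_of_finite fun s => isClosed_iUnion_of_finite fun _ =>
    ((hK.image (Finset.continuous_restrict s)).isClosed).preimage (Finset.continuous_restrict s)

end Hamming

section InfPowHammingDist

variable {α : Type*} [DecidableEq α] {n : ℕ}

theorem hammingDist_cons (a b : α) (x y : Fin n → α) :
    hammingDist (Fin.cons a x : Fin (n + 1) → α) (Fin.cons b y) =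
      hammingDist x y + if a = b then 0 else 1 := by
  simp [hammingDist, Finset.card_filter, Fin.sum_univ_succ, add_comm]

theorem hammingDist_cons_le (a : α) (x : Fin n → α) (y : Fin (n + 1) → α) :
    hammingDist (Fin.cons a x : Fin (n + 1) → α) y ≤ hammingDist x (Fin.tail y) + 1 := by
  rw [← Fin.cons_self_tail y, hammingDist_cons, Fin.tail_cons]
  split_ifs <;> omega

/-- For `L = e ^ λ` this is `e ^ (λ d(x, K))`, with `d` the Hamming distance to `K`. -/
noncomputable def infPowHammingDist (L : ℝ≥0∞) (K : Set (Fin n → α)) (x : Fin n → α) : ℝ≥0∞ :=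
  ⨅ y ∈ K, L ^ hammingDist x y

variable {L : ℝ≥0∞}

theorem pow_le_infPowHammingDist (hL : 1 ≤ L) {K : Set (Fin n → α)} {x : Fin n → α} {m : ℕ}
    (hx : ∀ y ∈ K, m ≤ hammingDist x y) : L ^ m ≤ infPowHammingDist L K x :=
  le_iInf₂ fun y hy => pow_le_pow_right₀ hL (hx y hy)

theorem infPowHammingDist_cons_le_slice (K : Set (Fin (n + 1) → α)) (t : α) (z : Fin n → α) :
    infPowHammingDist L K (Fin.cons t z) ≤ infPowHammingDist L {z | Fin.cons t z ∈ K} z :=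
  le_iInf₂ fun y hy => iInf₂_le_of_le (Fin.cons t y) hy (by simp [hammingDist_cons])

theorem infPowHammingDist_cons_le_tail (hL : 1 ≤ L) (hL' : L ≠ ⊤) (K : Set (Fin (n + 1) → α))
    (t : α) (z : Fin n → α) :
    infPowHammingDist L K (Fin.cons t z) ≤ L * infPowHammingDist L (Fin.tail '' K) z := by
  have hL0 : L ≠ 0 := (zero_lt_one.trans_le hL).ne'
  simp only [infPowHammingDist, iInf_image, ENNReal.mul_iInf_of_ne hL0 hL']
  refine iInf₂_mono fun y _ => ?_
  rw [← pow_succ']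
  exact pow_le_pow_right₀ hL (hammingDist_cons_le t z y)

end InfPowHammingDist

section PiFinCons

variable {α : Type*} [MeasurableSpace α] (ν : Measure α) [SigmaFinite ν] {n : ℕ}

theorem MeasurableEquiv.coe_piFinSuccAbove_zero_symm :
    ⇑(MeasurableEquiv.piFinSuccAbove (fun _ : Fin (n + 1) => α) 0).symm =
      fun p : α × (Fin n → α) => (Fin.cons p.1 p.2 : Fin (n + 1) → α) := by
  ext p : 1
  simp [MeasurableEquiv.piFinSuccAbove_symm_apply]
  rfl

theorem measurePreserving_finCons :
    MeasurePreserving (fun p : α × (Fin n → α) => (Fin.cons p.1 p.2 : Fin (n + 1) → α))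
      (ν.prod (Measure.pi fun _ => ν)) (Measure.pi fun _ => ν) := by
  rw [← MeasurableEquiv.coe_piFinSuccAbove_zero_symm]
  exact (measurePreserving_piFinSuccAbove (fun _ => ν) 0).symm

theorem measurableEmbedding_finCons :
    MeasurableEmbedding (fun p : α × (Fin n → α) => (Fin.cons p.1 p.2 : Fin (n + 1) → α)) := by
  rw [← MeasurableEquiv.coe_piFinSuccAbove_zero_symm]
  exact MeasurableEquiv.measurableEmbedding _

theorem measurable_measure_finCons_slice {s : Set (Fin (n + 1) → α)} (hs : MeasurableSet s) :
    Measurable fun t => Measure.pi (fun _ => ν) {z : Fin n → α | Fin.cons t z ∈ s} :=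
  measurable_measure_prodMk_left ((measurePreserving_finCons ν).measurable hs)

theorem MeasureTheory.Measure.pi_eq_lintegral_finCons_slice {s : Set (Fin (n + 1) → α)}
    (hs : MeasurableSet s) :
    Measure.pi (fun _ => ν) s =
      ∫⁻ t, Measure.pi (fun _ => ν) {z : Fin n → α | Fin.cons t z ∈ s} ∂ν := by
  rw [← (measurePreserving_finCons ν).measure_preimage hs.nullMeasurableSet,
    Measure.prod_apply ((measurePreserving_finCons ν).measurable hs)]
  rfl

theorem lintegral_pi_le_lintegral_lintegral_finCons (f : (Fin (n + 1) → α) → ℝ≥0∞) :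
    ∫⁻ x, f x ∂Measure.pi (fun _ => ν) ≤
      ∫⁻ t, ∫⁻ z, f (Fin.cons t z) ∂Measure.pi (fun _ => ν) ∂ν := by
  rw [← (measurePreserving_finCons ν).lintegral_comp_emb measurableEmbedding_finCons]
  exact lintegral_prod_le _

end PiFinCons

/-- With `g = a / M ∈ [0, 1]`, the hypotheses say `M J ≤ C · min (1 / g) L`, and the conclusion
is the chord bound `min (1 / g) L ≤ 1 + L (1 - g)`. -/
theorem ENNReal.sq_mul_add_le_of_mul_le {L C M a J : ℝ≥0∞} (hL : L ≠ ⊤) (hC : C ≠ ⊤) (hM : M ≠ ⊤)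
    (haM : a ≤ M) (haJ : a * J ≤ C) (hMJ : M * J ≤ L * C) :
    M ^ 2 * J + L * C * a ≤ L * C * M + C * M := by
  rcases eq_or_ne M 0 with rfl | hM0
  · simp [nonpos_iff_eq_zero.1 haM]
  have hJ : J ≠ ⊤ := by
    rintro rfl
    exact ENNReal.mul_ne_top hL hC (top_le_iff.1 (by simpa [hM0] using hMJ))
  lift L to ℝ≥0 using hL
  lift C to ℝ≥0 using hC
  lift M to ℝ≥0 using hM
  lift a to ℝ≥0 using ne_top_of_le_ne_top ENNReal.coe_ne_top haM
  lift J to ℝ≥0 using hJ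
  norm_cast at haM haJ hMJ ⊢
  rw [← NNReal.coe_le_coe] at haM haJ hMJ ⊢
  push_cast at haM haJ hMJ ⊢
  have hC0 := C.coe_nonneg
  have hMnn := M.coe_nonneg
  rcases le_or_gt ((L : ℝ) * a) M with hLa | hLa
  · nlinarith [mul_le_mul_of_nonneg_left hMJ hMnn, mul_le_mul_of_nonneg_left hLa hC0]
  · have ha : (0 : ℝ) < a := lt_of_le_of_ne a.coe_nonneg fun h => by
      rw [← h, mul_zero] at hLa; linarith
    refine le_of_mul_le_mul_left ?_ ha
    nlinarith [mul_le_mul_of_nonneg_left haJ (sq_nonneg (M : ℝ)),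
      mul_nonneg hC0 (mul_nonneg (sub_nonneg.2 haM) (sub_nonneg.2 hLa.le))]

theorem ENNReal.mul_le_of_sq_mul_add_le {L C E M a T : ℝ≥0∞} (hL : L ≠ ⊤) (hC : C ≠ ⊤)
    (hM : M ≠ ⊤) (hE : (1 + L) ^ 2 ≤ 4 * L * E) (hE' : E ≠ ⊤) (haM : a ≤ M)
    (h : M ^ 2 * T + L * C * a ≤ L * C * M + C * M) : a * T ≤ C * E := by
  rcases eq_or_ne M 0 with rfl | hM0
  · simp [nonpos_iff_eq_zero.1 haM]
  have hT : T ≠ ⊤ := by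
    rintro rfl
    have : L * C * M + C * M ≠ ⊤ := by finiteness
    exact this (top_le_iff.1 (le_trans (by simp [hM0]) h))
  lift L to ℝ≥0 using hL
  lift C to ℝ≥0 using hC
  lift E to ℝ≥0 using hE'
  lift M to ℝ≥0 using hM
  lift a to ℝ≥0 using ne_top_of_le_ne_top ENNReal.coe_ne_top haM
  lift T to ℝ≥0 using hT
  norm_cast at hE haM h ⊢
  rw [← NNReal.coe_le_coe] at hE haM h ⊢
  push_cast at hE haM h ⊢
  have hC0 := C.coe_nonneg
  have ha0 := a.coe_nonneg
  have hMpos : (0 : ℝ) < M := lt_of_le_of_ne M.coe_nonneg (by exact_mod_cast hM0.symm)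
  have hLpos : (0 : ℝ) < L := lt_of_le_of_ne L.coe_nonneg fun h0 => by
    rw [← h0] at hE; norm_num at hE
  have hamgm : (a : ℝ) * (L * M + M - L * a) ≤ E * M ^ 2 := by
    refine le_of_mul_le_mul_left ?_ (by positivity : (0 : ℝ) < 4 * L)
    nlinarith [sq_nonneg ((M : ℝ) * (1 + L) - 2 * L * a),
      mul_le_mul_of_nonneg_right hE (sq_nonneg (M : ℝ))]
  refine le_of_mul_le_mul_left ?_ (pow_pos hMpos 2)
  nlinarith [mul_le_mul_of_nonneg_left h ha0, mul_le_mul_of_nonneg_left hamgm hC0]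

theorem one_add_exp_sq_le (l : ℝ) : (1 + exp l) ^ 2 ≤ 4 * exp l * exp (l ^ 2 / 4) := by
  have hcosh := cosh_le_exp_half_sq (l / 2)
  rw [cosh_eq] at hcosh
  set u := exp (l / 2)
  have hu : exp l = u ^ 2 := by rw [← exp_nat_mul]; ring_nf
  have hE : exp (l ^ 2 / 4) = exp ((l / 2) ^ 2 / 2) ^ 2 := by rw [← exp_nat_mul]; ring_nf
  have huv : u * exp (-(l / 2)) = 1 := by rw [← exp_add]; simp
  have hsq : (u + exp (-(l / 2))) ^ 2 ≤ (2 * exp ((l / 2) ^ 2 / 2)) ^ 2 :=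
    pow_le_pow_left₀ (by positivity) (by linarith) 2
  calc (1 + exp l) ^ 2 = u ^ 2 * (u + exp (-(l / 2))) ^ 2 := by
        rw [hu]; linear_combination (-(2 * u ^ 2) - u * exp (-(l / 2)) - 1) * huv
    _ ≤ u ^ 2 * (2 * exp ((l / 2) ^ 2 / 2)) ^ 2 := by gcongr
    _ = 4 * exp l * exp (l ^ 2 / 4) := by rw [hu, hE]; ring

section Talagrand

variable {α : Type*} [DecidableEq α] [TopologicalSpace α] [T2Space α] [SecondCountableTopology α]
  [MeasurableSpace α] [OpensMeasurableSpace α] (ν : Measure α) [IsProbabilityMeasure ν]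
  {L E : ℝ≥0∞}

theorem measure_mul_lintegral_infPowHammingDist_succ_le {n : ℕ} {C : ℝ≥0∞} (hL : 1 ≤ L)
    (hL' : L ≠ ⊤) (hC : C ≠ ⊤) (hE : (1 + L) ^ 2 ≤ 4 * L * E) (hE' : E ≠ ⊤)
    (ih : ∀ K : Set (Fin n → α), IsCompact K →
      Measure.pi (fun _ => ν) K * ∫⁻ x, infPowHammingDist L K x ∂Measure.pi (fun _ => ν) ≤ C)
    {K : Set (Fin (n + 1) → α)} (hK : IsCompact K) :
    Measure.pi (fun _ => ν) K * ∫⁻ x, infPowHammingDist L K x ∂Measure.pi (fun _ => ν) ≤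
      C * E := by
  set μ : Measure (Fin n → α) := Measure.pi fun _ => ν
  set K' : Set (Fin n → α) := Fin.tail '' K
  set M := μ K'
  set a : α → ℝ≥0∞ := fun t => μ {z | Fin.cons t z ∈ K}
  set J : α → ℝ≥0∞ := fun t => ∫⁻ z, infPowHammingDist L K (Fin.cons t z) ∂μ
  have hK' : IsCompact K' := hK.image (by fun_prop)
  have hslice_sub : ∀ t, {z | Fin.cons t z ∈ K} ⊆ K' := fun t z hz => ⟨Fin.cons t z, hz, by simp⟩
  have hslice : ∀ t, IsCompact {z | Fin.cons t z ∈ K} := fun t =>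
    hK'.of_isClosed_subset (hK.isClosed.preimage (continuous_const.finCons continuous_id))
      (hslice_sub t)
  have hM : M ≠ ⊤ := measure_ne_top μ K'
  have hpoint : ∀ t, M ^ 2 * J t + L * C * a t ≤ L * C * M + C * M := fun t => by
    refine ENNReal.sq_mul_add_le_of_mul_le hL' hC hM (measure_mono (hslice_sub t)) ?_ ?_
    · exact (mul_le_mul_right (lintegral_mono fun z => infPowHammingDist_cons_le_slice K t z)
        _).trans (ih _ (hslice t))
    · calc M * J t ≤ M * ∫⁻ z, L * infPowHammingDist L K' z ∂μ :=
            mul_le_mul_right (lintegral_mono fun z => infPowHammingDist_cons_le_tail hL hL' K t z) M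
        _ = L * (M * ∫⁻ z, infPowHammingDist L K' z ∂μ) := by
            rw [lintegral_const_mul' _ _ hL']; ring
        _ ≤ L * C := by gcongr; exact ih K' hK'
  have hKa : Measure.pi (fun _ => ν) K = ∫⁻ t, a t ∂ν :=
    Measure.pi_eq_lintegral_finCons_slice ν hK.measurableSet
  refine ENNReal.mul_le_of_sq_mul_add_le hL' hC hM hE hE' ?_ ?_
  · rw [hKa]
    calc ∫⁻ t, a t ∂ν ≤ ∫⁻ _, M ∂ν := lintegral_mono fun t => measure_mono (hslice_sub t)
      _ = M := by simp
  · calc M ^ 2 * ∫⁻ x, infPowHammingDist L K x ∂Measure.pi (fun _ => ν) +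
          L * C * Measure.pi (fun _ => ν) K
        ≤ M ^ 2 * ∫⁻ t, J t ∂ν + L * C * ∫⁻ t, a t ∂ν := by
          rw [hKa]; gcongr; exact lintegral_pi_le_lintegral_lintegral_finCons ν _
      _ = ∫⁻ t, (M ^ 2 * J t + L * C * a t) ∂ν := by
          rw [lintegral_add_right' _
            ((measurable_measure_finCons_slice ν hK.measurableSet).const_mul _).aemeasurable,
            lintegral_const_mul' _ _ (by finiteness), lintegral_const_mul' _ _ (by finiteness)]
      _ ≤ ∫⁻ _, (L * C * M + C * M) ∂ν := lintegral_mono hpoint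
      _ = L * C * M + C * M := by simp

theorem measure_mul_lintegral_infPowHammingDist_le (hL : 1 ≤ L) (hL' : L ≠ ⊤)
    (hE : (1 + L) ^ 2 ≤ 4 * L * E) (hE' : E ≠ ⊤) :
    ∀ {n : ℕ} {K : Set (Fin n → α)}, IsCompact K →
      Measure.pi (fun _ => ν) K * ∫⁻ x, infPowHammingDist L K x ∂Measure.pi (fun _ => ν) ≤
        E ^ n
  | 0, K, _ => by
    rcases K.eq_empty_or_nonempty with rfl | ⟨y, hy⟩
    · simp
    calc _ ≤ 1 * ∫⁻ _, 1 ∂Measure.pi (fun _ => ν) := by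
          gcongr
          · exact prob_le_one
          · exact iInf₂_le_of_le y hy (by simp [Subsingleton.elim _ y])
      _ = E ^ 0 := by simp
  | n + 1, K, hK =>
    (measure_mul_lintegral_infPowHammingDist_succ_le ν hL hL' (ENNReal.pow_ne_top hE') hE hE'
      (fun _ hK' => measure_mul_lintegral_infPowHammingDist_le hL hL' hE hE' hK') hK).trans_eq
      (pow_succ E n).symm

theorem measure_compl_hammingCthickening_mul_le {n : ℕ} {K : Set (Fin n → α)} (hK : IsCompact K)
    (ε : ℕ) : Measure.pi (fun _ => ν) (hammingCthickening ε K)ᶜ * Measure.pi (fun _ => ν) K ≤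
      ENNReal.ofReal (exp (-(ε : ℝ) ^ 2 / n)) := by
  -- `λ = 2ε / n` minimises `n λ² / 4 - λ ε`
  set l : ℝ := 2 * ε / n
  set L := ENNReal.ofReal (exp l)
  have hL : 1 ≤ L := ENNReal.one_le_ofReal.2 (one_le_exp (by positivity))
  have hE : (1 + L) ^ 2 ≤ 4 * L * ENNReal.ofReal (exp (l ^ 2 / 4)) := by
    have h := ENNReal.ofReal_le_ofReal (one_add_exp_sq_le l)
    rwa [ENNReal.ofReal_pow (by positivity), ENNReal.ofReal_add zero_le_one (exp_pos l).le,
      ENNReal.ofReal_mul (by positivity), ENNReal.ofReal_mul (by norm_num),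
      ENNReal.ofReal_one, ENNReal.ofReal_ofNat] at h
  have hT := measure_mul_lintegral_infPowHammingDist_le ν hL ENNReal.ofReal_ne_top hE
    ENNReal.ofReal_ne_top hK
  have hMarkov : Measure.pi (fun _ => ν) (hammingCthickening ε K)ᶜ * L ^ ε ≤
      ∫⁻ x, infPowHammingDist L K x ∂Measure.pi (fun _ => ν) :=
    calc _ = ∫⁻ _ in (hammingCthickening ε K)ᶜ, L ^ ε ∂Measure.pi (fun _ => ν) := by
          rw [setLIntegral_const, mul_comm]
      _ ≤ ∫⁻ x in (hammingCthickening ε K)ᶜ, infPowHammingDist L K x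
            ∂Measure.pi (fun _ => ν) :=
          setLIntegral_mono' (hK.isClosed_hammingCthickening ε).isOpen_compl.measurableSet
            fun x hx => pow_le_infPowHammingDist hL fun y hy => (not_le.1 fun h => hx ⟨y, hy, h⟩).le
      _ ≤ _ := setLIntegral_le_lintegral _ _
  have hexp : ENNReal.ofReal (exp (l ^ 2 / 4)) ^ n =
      ENNReal.ofReal (exp (-(ε : ℝ) ^ 2 / n)) * L ^ ε := by
    rw [← ENNReal.ofReal_pow (exp_pos _).le, ← ENNReal.ofReal_pow (exp_pos _).le,
      ← ENNReal.ofReal_mul (exp_pos _).le, ← exp_nat_mul, ← exp_nat_mul, ← exp_add]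
    congr 2
    -- for `n = 0` both exponents are `0`, as `x / 0 = 0`
    rcases eq_or_ne (n : ℝ) 0 with hn | hn
    · simp [l, hn]
    · simp only [l]; field_simp; ring
  have hLε : L ^ ε ≠ 0 := pow_ne_zero ε (zero_lt_one.trans_le hL).ne'
  refine (ENNReal.mul_le_mul_iff_left hLε (ENNReal.pow_ne_top ENNReal.ofReal_ne_top)).1 ?_
  calc _ = Measure.pi (fun _ => ν) K *
        (Measure.pi (fun _ => ν) (hammingCthickening ε K)ᶜ * L ^ ε) := by ring
    _ ≤ _ := (mul_le_mul_right hMarkov _).trans (hT.trans_eq hexp)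

end Talagrand

theorem volume_Icc_zero_one (n : ℕ) : volume (Set.Icc (0 : Fin n → ℝ) 1) = 1 := by
  simp [Real.volume_Icc_pi]

theorem volume_restrict_Icc_eq_pi (n : ℕ) :
    (volume : Measure (Fin n → ℝ)).restrict (Set.Icc 0 1) =
      Measure.pi fun _ => volume.restrict (Set.Icc (0 : ℝ) 1) := by
  rw [← Set.pi_univ_Icc, volume_pi, Measure.restrict_pi_pi]
  rfl

theorem volume_Icc_diff_hammingCthickening_mul_le {n : ℕ} {A : Set (Fin n → ℝ)}
    (hA : MeasurableSet A) (hAsub : A ⊆ Set.Icc 0 1) (ε : ℕ) :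
    volume (Set.Icc 0 1 \ hammingCthickening ε A) * volume A ≤
      ENNReal.ofReal (exp (-(ε : ℝ) ^ 2 / n)) := by
  have : IsProbabilityMeasure (volume.restrict (Set.Icc (0 : ℝ) 1)) := ⟨by simp⟩
  have hAfin : volume A ≠ ⊤ := measure_ne_top_of_subset hAsub (by simp [volume_Icc_zero_one])
  rw [hA.measure_eq_iSup_isCompact_of_ne_top hAfin]
  simp only [ENNReal.mul_iSup]
  refine iSup₂_le fun K hKA => iSup_le fun hK => ?_
  have hbound :=
    measure_compl_hammingCthickening_mul_le (volume.restrict (Set.Icc (0 : ℝ) 1)) hK ε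
  rw [← volume_restrict_Icc_eq_pi, Measure.restrict_eq_self _ (hKA.trans hAsub),
    Measure.restrict_apply' measurableSet_Icc] at hbound
  refine le_trans (mul_le_mul_left (measure_mono ?_) _) hbound
  exact fun x ⟨hx, hxA⟩ => ⟨fun ⟨y, hy, h⟩ => hxA ⟨y, hKA hy, h⟩, hx⟩

theorem hamming_expansion_concentration (n : ℕ) (A : Set (Fin n → ℝ))
    (hA : MeasurableSet A) (hAsub : A ⊆ Set.Icc 0 1)
    (hApos : 0 < (volume A).toReal) (ε : ℕ) :
    volume {x ∈ Set.Icc (0 : Fin n → ℝ) 1 | ∃ y ∈ A, l0Dist x y ≤ ε} ≥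
      ENNReal.ofReal (1 - Real.exp (-(ε : ℝ) ^ 2 / n) / (volume A).toReal) := by
  have hA0 : volume A ≠ 0 := fun h => by simp [h] at hApos
  have hAtop : volume A ≠ ⊤ := fun h => by simp [h] at hApos
  have hcover : volume (Set.Icc (0 : Fin n → ℝ) 1) ≤
      volume {x ∈ Set.Icc (0 : Fin n → ℝ) 1 | ∃ y ∈ A, l0Dist x y ≤ ε} +
        volume (Set.Icc 0 1 \ hammingCthickening ε A) :=
    measure_le_inter_add_sdiff _ _ _
  calc ENNReal.ofReal (1 - exp (-(ε : ℝ) ^ 2 / n) / (volume A).toReal)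
      = 1 - ENNReal.ofReal (exp (-(ε : ℝ) ^ 2 / n)) / volume A := by
        rw [ENNReal.ofReal_sub _ (by positivity), ENNReal.ofReal_one,
          ENNReal.ofReal_div_of_pos hApos, ENNReal.ofReal_toReal hAtop]
    _ ≤ 1 - volume (Set.Icc 0 1 \ hammingCthickening ε A) :=
        tsub_le_tsub_left ((ENNReal.le_div_iff_mul_le (Or.inl hA0) (Or.inl hAtop)).2
          (volume_Icc_diff_hammingCthickening_mul_le hA hAsub ε)) 1
    _ ≤ _ := by
        rw [tsub_le_iff_right, ← volume_Icc_zero_one]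
        exact hcover
end
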